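/- arXiv:2507.23460 — 4 statements merged into one kernel-verified Lean document; each statement's English description precedes it below -/
import Mathlib

section
/- The number of generalized Dyck paths from (0,0) to (rn,n) using unit up and right steps that never go below the line y = x/r equals the Fuss–Catalan number (1/(rn+1)) * binomial((r+1)n, n). -/
open Finset

/-- A word `w : Fin ((r+1)*n) → Bool` (with `true` = up step `U`, `false` = right step `R`)
is an `r`-Dyck path of size `n`: it has exactly `n` up steps, and every prefix stays weakly
above the line `y = x/r`, i.e. the number of right steps is at most `r` times the number of
up steps in every prefix. -/
def IsRDyckWord (r n : ℕ) (w : Fin ((r + 1) * n) → Bool) : Prop :=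
  (Finset.univ.filter (fun i => w i = true)).card = n ∧
  ∀ k : ℕ, k ≤ (r + 1) * n →
    (Finset.univ.filter (fun i : Fin ((r + 1) * n) => (i : ℕ) < k ∧ w i = false)).card ≤
      r * (Finset.univ.filter (fun i : Fin ((r + 1) * n) => (i : ℕ) < k ∧ w i = true)).card


/-- Signed prefix sum: `true` counts `r`, `false` counts `-1`. -/
def psumZ (r : ℕ) (v : ℕ → Bool) (k : ℕ) : ℤ :=
  ∑ i ∈ Finset.range k, (if v i then (r : ℤ) else -1)

lemma psumZ_succ (r : ℕ) (v : ℕ → Bool) (k : ℕ) :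
    psumZ r v (k + 1) = psumZ r v k + (if v k then (r : ℤ) else -1) :=
  Finset.sum_range_succ _ _

def tcnt (v : ℕ → Bool) (k : ℕ) : ℕ := ((range k).filter (fun i => v i = true)).card
def fcnt (v : ℕ → Bool) (k : ℕ) : ℕ := ((range k).filter (fun i => v i = false)).card

lemma tcnt_succ (v : ℕ → Bool) (k : ℕ) :
    tcnt v (k + 1) = tcnt v k + if v k then 1 else 0 := by
  have hk : k ∉ Finset.range k := by simp
  by_cases h : v k = true <;>
    simp [tcnt, Finset.range_add_one, Finset.filter_insert, h,
      Finset.card_insert_of_notMem (fun h' => hk (Finset.mem_of_mem_filter _ h'))]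

lemma fcnt_succ (v : ℕ → Bool) (k : ℕ) :
    fcnt v (k + 1) = fcnt v k + if v k then 0 else 1 := by
  have hk : k ∉ Finset.range k := by simp
  by_cases h : v k = true <;>
    simp [fcnt, Finset.range_add_one, Finset.filter_insert, h,
      Finset.card_insert_of_notMem (fun h' => hk (Finset.mem_of_mem_filter _ h'))]

lemma psumZ_eq_counts (r : ℕ) (v : ℕ → Bool) (k : ℕ) :
    psumZ r v k = r * tcnt v k - fcnt v k := by
  induction k with
  | zero => simp [psumZ, tcnt, fcnt]
  | succ k ih =>
      rw [psumZ_succ, ih, tcnt_succ, fcnt_succ]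
      by_cases h : v k = true <;> simp [h] <;> push_cast <;> ring_nf <;> ring

lemma tcnt_add_fcnt (v : ℕ → Bool) (k : ℕ) : tcnt v k + fcnt v k = k := by
  induction k with
  | zero => simp [tcnt, fcnt]
  | succ k ih =>
      rw [tcnt_succ, fcnt_succ]
      by_cases h : v k = true <;> simp [h] <;> omega

lemma psumZ_nonneg_iff (r : ℕ) (v : ℕ → Bool) (k : ℕ) :
    0 ≤ psumZ r v k ↔ fcnt v k ≤ r * tcnt v k := by
  rw [psumZ_eq_counts, sub_nonneg]
  exact_mod_cast Iff.rfl

lemma psumZ_shift (r : ℕ) (v : ℕ → Bool) (j k : ℕ) :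
    psumZ r v (j + k) = psumZ r v j + psumZ r (fun i => v (j + i)) k := by
  induction k with
  | zero => simp [psumZ]
  | succ k ih => rw [← Nat.add_assoc, psumZ_succ, ih, psumZ_succ]; ring

lemma psumZ_period (r m : ℕ) (v : ℕ → Bool) (hper : ∀ i, v (i + m) = v i) (k : ℕ) :
    psumZ r v (k + m) = psumZ r v k + psumZ r v m := by
  induction k with
  | zero => simp [psumZ]
  | succ k ih =>
      have : k + 1 + m = (k + m) + 1 := by ring
      rw [this, psumZ_succ, ih, hper k, psumZ_succ]; ring

lemma filter_range_card_fin (M : ℕ) (p : ℕ → Prop) [DecidablePred p] :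
    (Finset.univ.filter (fun i : Fin M => p i.val)).card = ((Finset.range M).filter p).card := by
  apply Finset.card_nbij (i := fun a => a.val)
  · intro a ha
    simp only [Finset.mem_coe, Finset.mem_filter, Finset.mem_range, Finset.mem_univ, true_and] at *
    exact ⟨a.isLt, ha⟩
  · intro a _ b _ h
    exact Fin.ext h
  · intro b hb
    simp only [Finset.coe_filter, Finset.mem_range, Set.mem_setOf_eq, Set.mem_image,
      Finset.mem_coe, Finset.mem_filter, Finset.mem_univ, true_and] at *
    exact ⟨⟨b, hb.1⟩, hb.2, rfl⟩

lemma range_filter_lt_and (L k : ℕ) (hk : k ≤ L) (q : ℕ → Prop) [DecidablePred q] :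
    ((range L).filter fun t => t < k ∧ q t) = (range k).filter q := by
  ext t
  simp only [Finset.mem_filter, Finset.mem_range]
  constructor
  · rintro ⟨_, h2, h3⟩; exact ⟨h2, h3⟩
  · rintro ⟨h1, h2⟩; exact ⟨lt_of_lt_of_le h1 hk, h1, h2⟩

lemma filter_rot_card (m c : ℕ) (hc : c ≤ m) (p : ℕ → Prop) [DecidablePred p] :
    ((Finset.range m).filter (fun i => p ((i + c) % m))).card
      = ((Finset.range m).filter p).card := by
  rcases Nat.eq_zero_or_pos m with hm | hm
  · subst hm; simp
  apply Finset.card_nbij' (i := fun a => (a + c) % m) (j := fun b => (b + (m - c)) % m)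
  · intro a ha
    simp only [Finset.mem_coe, Finset.mem_filter, Finset.mem_range] at *
    exact ⟨Nat.mod_lt _ hm, ha.2⟩
  · intro b hb
    simp only [Finset.mem_coe, Finset.mem_filter, Finset.mem_range] at *
    refine ⟨Nat.mod_lt _ hm, ?_⟩
    have : ((b + (m - c)) % m + c) % m = b := by
      rw [Nat.mod_add_mod]
      have : b + (m - c) + c = b + m := by omega
      rw [this, Nat.add_mod_right, Nat.mod_eq_of_lt hb.1]
    rw [this]; exact hb.2
  · intro a ha
    simp only [Finset.mem_coe, Finset.mem_filter, Finset.mem_range] at ha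
    beta_reduce
    rw [Nat.mod_add_mod]
    have : a + c + (m - c) = a + m := by omega
    rw [this, Nat.add_mod_right, Nat.mod_eq_of_lt ha.1]
  · intro b hb
    simp only [Finset.mem_coe, Finset.mem_filter, Finset.mem_range] at hb
    beta_reduce
    rw [Nat.mod_add_mod]
    have : b + (m - c) + c = b + m := by omega
    rw [this, Nat.add_mod_right, Nat.mod_eq_of_lt hb.1]

/-- `j` is a good starting point: every prefix of length `≤ L` of the word read from `j`
has nonnegative signed sum. -/
def GoodStart (r L : ℕ) (v : ℕ → Bool) (j : ℕ) : Prop :=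
  ∀ k ≤ L, 0 ≤ psumZ r (fun i => v (j + i)) k

lemma goodStart_iff (r L : ℕ) (v : ℕ → Bool) (j : ℕ) :
    GoodStart r L v j ↔ ∀ k ≤ L, psumZ r v j ≤ psumZ r v (j + k) := by
  unfold GoodStart
  constructor
  · intro h k hk; have := h k hk; rw [psumZ_shift r v j k]; linarith
  · intro h k hk; have := h k hk; rw [psumZ_shift r v j k] at this; linarith

lemma exists_goodStart (r L : ℕ) (v : ℕ → Bool)
    (hper : ∀ i, v (i + (L + 1)) = v i) (htot : psumZ r v (L + 1) = -1) :
    ∃ j < L + 1, GoodStart r L v j := by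
  set m := L + 1 with hmdef
  have hm : 0 < m := Nat.succ_pos L
  have hex : ∃ j, j < m ∧ ∀ i < m, psumZ r v j ≤ psumZ r v i := by
    obtain ⟨j, hj, hmin⟩ := Finset.exists_min_image (Finset.range m) (psumZ r v)
      ⟨0, Finset.mem_range.mpr hm⟩
    exact ⟨j, Finset.mem_range.mp hj, fun i hi => hmin i (Finset.mem_range.mpr hi)⟩
  classical
  let j := Nat.find hex
  obtain ⟨hjm, hjmin⟩ := Nat.find_spec hex
  have hstrict : ∀ k < j, psumZ r v j < psumZ r v k := by
    intro k hk
    have hknot := Nat.find_min hex hk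
    push_neg at hknot
    obtain ⟨i, hi, hlt⟩ := hknot (lt_trans hk hjm)
    exact lt_of_le_of_lt (hjmin i hi) hlt
  refine ⟨j, hjm, (goodStart_iff r L v j).mpr ?_⟩
  intro k hk
  rcases Nat.lt_or_ge (j + k) m with h1 | h1
  · exact hjmin _ h1
  · have hd : j + k = (j + k - m) + m := by omega
    have hdlt : j + k - m < j := by omega
    rw [hd, psumZ_period r m v hper, htot]
    have := hstrict _ hdlt
    linarith

lemma goodStart_unique (r L : ℕ) (v : ℕ → Bool)
    (hper : ∀ i, v (i + (L + 1)) = v i) (htot : psumZ r v (L + 1) = -1)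
    (j₁ j₂ : ℕ) (h₁m : j₁ < L + 1) (h₂m : j₂ < L + 1)
    (h₁ : GoodStart r L v j₁) (h₂ : GoodStart r L v j₂) : j₁ = j₂ := by
  rw [goodStart_iff] at h₁ h₂
  by_contra hne
  -- WLOG j₁ < j₂
  wlog hlt : j₁ < j₂ generalizing j₁ j₂
  · exact this j₂ j₁ h₂m h₁m h₂ h₁ (Ne.symm hne) (by omega)
  have e1 : psumZ r v j₁ ≤ psumZ r v j₂ := by
    have := h₁ (j₂ - j₁) (by omega)
    rwa [show j₁ + (j₂ - j₁) = j₂ by omega] at this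
  have e2 : psumZ r v j₂ ≤ psumZ r v j₁ - 1 := by
    have := h₂ (j₁ + (L + 1) - j₂) (by omega)
    rw [show j₂ + (j₁ + (L + 1) - j₂) = j₁ + (L + 1) by omega,
      psumZ_period r (L + 1) v hper, htot] at this
    linarith
  linarith

/-- Extend a word `w` of length `L` to `ℕ → Bool`, padding with `false`. -/
def uext (L : ℕ) (w : Fin L → Bool) : ℕ → Bool :=
  fun t => if h : t < L then w ⟨t, h⟩ else false

/-- Extend a word of length `m` periodically to `ℕ → Bool`. -/
def pext (m : ℕ) (hm : 0 < m) (v : Fin m → Bool) : ℕ → Bool :=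
  fun i => v ⟨i % m, Nat.mod_lt _ hm⟩

lemma pext_period (m : ℕ) (hm : 0 < m) (v : Fin m → Bool) (i : ℕ) :
    pext m hm v (i + m) = pext m hm v i := by
  simp [pext, Nat.add_mod_right]

lemma pext_eq_of_lt (m : ℕ) (hm : 0 < m) (v : Fin m → Bool) (i : Fin m) :
    pext m hm v i = v i := by
  simp [pext, Nat.mod_eq_of_lt i.isLt]

lemma isRDyckWord_iff (r n : ℕ) (w : Fin ((r + 1) * n) → Bool) :
    IsRDyckWord r n w ↔
      tcnt (uext ((r + 1) * n) w) ((r + 1) * n) = n ∧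
        ∀ k ≤ (r + 1) * n,
          fcnt (uext ((r + 1) * n) w) k ≤ r * tcnt (uext ((r + 1) * n) w) k := by
  classical
  have hfin : ∀ (b : Bool) (k : ℕ), k ≤ ((r + 1) * n) →
      (Finset.univ.filter (fun i : Fin ((r + 1) * n) => (i : ℕ) < k ∧ w i = b)).card
        = ((Finset.range k).filter (fun t => uext ((r + 1) * n) w t = b)).card := by
    intro b k hk
    rw [show (Finset.univ.filter (fun i : Fin ((r + 1) * n) => (i : ℕ) < k ∧ w i = b))
        = (Finset.univ.filter (fun i : Fin ((r + 1) * n) => (i : ℕ) < k ∧ uext ((r + 1) * n) w i.val = b)) from ?_]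
    · rw [filter_range_card_fin ((r + 1) * n) (fun t => t < k ∧ uext ((r + 1) * n) w t = b),
        range_filter_lt_and ((r + 1) * n) k hk]
    · apply Finset.filter_congr
      intro i _
      simp [uext, i.isLt]
  have hfull : (Finset.univ.filter (fun i : Fin ((r + 1) * n) => w i = true)).card
      = tcnt (uext ((r + 1) * n) w) ((r + 1) * n) := by
    unfold tcnt
    rw [show (Finset.univ.filter (fun i : Fin ((r + 1) * n) => w i = true))
        = (Finset.univ.filter (fun i : Fin ((r + 1) * n) => uext ((r + 1) * n) w i.val = true)) from ?_]
    · exact filter_range_card_fin ((r + 1) * n) (fun t => uext ((r + 1) * n) w t = true)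
    · apply Finset.filter_congr
      intro i _
      simp [uext, i.isLt]
  unfold IsRDyckWord tcnt fcnt
  rw [hfull]
  constructor
  · rintro ⟨h1, h2⟩
    refine ⟨h1, fun k hk => ?_⟩
    have := h2 k hk
    rwa [hfin false k hk, hfin true k hk] at this
  · rintro ⟨h1, h2⟩
    refine ⟨h1, fun k hk => ?_⟩
    have := h2 k hk
    rwa [← hfin false k hk, ← hfin true k hk] at this

lemma psumZ_congr (r : ℕ) (v₁ v₂ : ℕ → Bool) (k : ℕ) (h : ∀ i < k, v₁ i = v₂ i) :
    psumZ r v₁ k = psumZ r v₂ k :=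
  Finset.sum_congr rfl (fun i hi => by rw [h i (Finset.mem_range.mp hi)])

lemma tcnt_congr (v₁ v₂ : ℕ → Bool) (k : ℕ) (h : ∀ i < k, v₁ i = v₂ i) :
    tcnt v₁ k = tcnt v₂ k := by
  unfold tcnt
  congr 1
  apply Finset.filter_congr
  intro i hi
  rw [h i (Finset.mem_range.mp hi)]

lemma fcnt_congr (v₁ v₂ : ℕ → Bool) (k : ℕ) (h : ∀ i < k, v₁ i = v₂ i) :
    fcnt v₁ k = fcnt v₂ k := by
  unfold fcnt
  congr 1
  apply Finset.filter_congr
  intro i hi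
  rw [h i (Finset.mem_range.mp hi)]

/-- Rotate the padded word `w ++ [R]` so that it starts at position `j`. -/
def Frot (r n : ℕ) (w : Fin ((r + 1) * n) → Bool) (j : ℕ) :
    Fin ((r + 1) * n + 1) → Bool :=
  fun i => uext ((r + 1) * n) w ((i.val + (((r + 1) * n + 1) - j)) % ((r + 1) * n + 1))

lemma pext_Frot (r n : ℕ) (w : Fin ((r + 1) * n) → Bool) (j : ℕ)
    (hj : j ≤ (r + 1) * n + 1) (i : ℕ) :
    pext ((r + 1) * n + 1) (Nat.succ_pos _) (Frot r n w j) (j + i)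
      = uext ((r + 1) * n) w (i % ((r + 1) * n + 1)) := by
  set m := (r + 1) * n + 1 with hm
  show uext ((r + 1) * n) w (((j + i) % m + (m - j)) % m) = _
  congr 1
  rw [Nat.mod_add_mod]
  have : j + i + (m - j) = i + m := by omega
  rw [this, Nat.add_mod_right]

lemma uext_last (r n : ℕ) (w : Fin ((r + 1) * n) → Bool) :
    uext ((r + 1) * n) w ((r + 1) * n) = false := by
  simp [uext]

lemma tcnt_uext_succ (r n : ℕ) (w : Fin ((r + 1) * n) → Bool) :
    tcnt (uext ((r + 1) * n) w) ((r + 1) * n + 1)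
      = tcnt (uext ((r + 1) * n) w) ((r + 1) * n) := by
  rw [tcnt_succ, uext_last]
  simp

/-- The rotation `Frot r n w j` has the same number of `true`s as `w ++ [R]`. -/
lemma card_true_Frot (r n : ℕ) (w : Fin ((r + 1) * n) → Bool) (j : ℕ)
    (hj : j ≤ (r + 1) * n + 1)
    (htc : tcnt (uext ((r + 1) * n) w) ((r + 1) * n) = n) :
    (Finset.univ.filter (fun i : Fin ((r + 1) * n + 1) => Frot r n w j i = true)).card
      = n := by
  set m := (r + 1) * n + 1 with hm
  have h1 : (Finset.univ.filter (fun i : Fin m => Frot r n w j i = true)).card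
      = ((Finset.range m).filter
          (fun t => uext ((r + 1) * n) w ((t + (m - j)) % m) = true)).card :=
    filter_range_card_fin m (fun t => uext ((r + 1) * n) w ((t + (m - j)) % m) = true)
  rw [h1, filter_rot_card m (m - j) (by omega) (fun t => uext ((r + 1) * n) w t = true)]
  have : ((Finset.range m).filter (fun t => uext ((r + 1) * n) w t = true)).card
      = tcnt (uext ((r + 1) * n) w) m := rfl
  rw [this, hm, tcnt_uext_succ, htc]

/-- Total signed sum of the periodic extension of a word with `n` `true`s is `-1`. -/
lemma psumZ_pext_total (r n : ℕ) (v : Fin ((r + 1) * n + 1) → Bool)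
    (hv : (Finset.univ.filter (fun i => v i = true)).card = n) :
    psumZ r (pext ((r + 1) * n + 1) (Nat.succ_pos _) v) ((r + 1) * n + 1) = -1 := by
  have htc : tcnt (pext ((r + 1) * n + 1) (Nat.succ_pos _) v) ((r + 1) * n + 1) = n := by
    have h1 : tcnt (pext ((r + 1) * n + 1) (Nat.succ_pos _) v) ((r + 1) * n + 1)
        = (Finset.univ.filter
            (fun i : Fin ((r + 1) * n + 1) =>
              pext ((r + 1) * n + 1) (Nat.succ_pos _) v i.val = true)).card :=
      (filter_range_card_fin ((r + 1) * n + 1)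
        (fun t => pext ((r + 1) * n + 1) (Nat.succ_pos _) v t = true)).symm
    rw [h1]
    have h3 : (Finset.univ.filter
          (fun i : Fin ((r + 1) * n + 1) =>
            pext ((r + 1) * n + 1) (Nat.succ_pos _) v i.val = true))
        = (Finset.univ.filter (fun i : Fin ((r + 1) * n + 1) => v i = true)) := by
      apply Finset.filter_congr
      intro i _
      have h2 : pext ((r + 1) * n + 1) (Nat.succ_pos _) v i.val = v i := by
        show v ⟨i.val % ((r + 1) * n + 1), _⟩ = v i
        congr
        exact Nat.mod_eq_of_lt i.isLt
      rw [h2]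
    rw [h3, hv]
  have hfc : fcnt (pext ((r + 1) * n + 1) (Nat.succ_pos _) v) ((r + 1) * n + 1)
      = r * n + 1 := by
    have := tcnt_add_fcnt (pext ((r + 1) * n + 1) (Nat.succ_pos _) v) ((r + 1) * n + 1)
    have hd : (r + 1) * n = r * n + n := by ring
    omega
  rw [psumZ_eq_counts, htc, hfc]
  push_cast
  ring

/-- `j` is a good starting point for the rotation `Frot r n w j` when `w` satisfies the
Dyck prefix condition. -/
lemma goodStart_Frot (r n : ℕ) (w : Fin ((r + 1) * n) → Bool) (j : ℕ)
    (hj : j ≤ (r + 1) * n + 1)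
    (hpre : ∀ k ≤ (r + 1) * n,
      fcnt (uext ((r + 1) * n) w) k ≤ r * tcnt (uext ((r + 1) * n) w) k) :
    GoodStart r ((r + 1) * n)
      (pext ((r + 1) * n + 1) (Nat.succ_pos _) (Frot r n w j)) j := by
  intro k hk
  have hcong : ∀ i < k,
      (fun i => pext ((r + 1) * n + 1) (Nat.succ_pos _) (Frot r n w j) (j + i)) i
        = uext ((r + 1) * n) w i := by
    intro i hi
    show pext ((r + 1) * n + 1) (Nat.succ_pos _) (Frot r n w j) (j + i)
      = uext ((r + 1) * n) w i
    rw [pext_Frot r n w j hj i, Nat.mod_eq_of_lt (by omega)]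
  rw [psumZ_congr r _ _ k hcong, psumZ_nonneg_iff]
  exact hpre k hk

/-- Reading `Frot r n w j` from position `j` recovers `w`. -/
lemma read_Frot (r n : ℕ) (w : Fin ((r + 1) * n) → Bool) (j : ℕ)
    (hj : j ≤ (r + 1) * n + 1) (i : Fin ((r + 1) * n)) :
    pext ((r + 1) * n + 1) (Nat.succ_pos _) (Frot r n w j) (j + i.val) = w i := by
  rw [pext_Frot r n w j hj, Nat.mod_eq_of_lt (by omega)]
  simp [uext, i.isLt]

/-- The letter just after a good window is a right step. -/
lemma last_of_goodStart (r n : ℕ) (v : Fin ((r + 1) * n + 1) → Bool)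
    (hv : (Finset.univ.filter (fun i => v i = true)).card = n)
    (j : ℕ)
    (hgood : GoodStart r ((r + 1) * n) (pext ((r + 1) * n + 1) (Nat.succ_pos _) v) j) :
    pext ((r + 1) * n + 1) (Nat.succ_pos _) v (j + (r + 1) * n) = false := by
  set ve := pext ((r + 1) * n + 1) (Nat.succ_pos _) v with hve
  have hper := pext_period ((r + 1) * n + 1) (Nat.succ_pos _) v
  have htot := psumZ_pext_total r n v hv
  have h1 : psumZ r ve (j + ((r + 1) * n + 1)) = psumZ r ve j - 1 := by
    rw [psumZ_period r ((r + 1) * n + 1) ve hper, htot]; ring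
  have h2 : psumZ r ve (j + ((r + 1) * n + 1))
      = psumZ r ve (j + (r + 1) * n) + (if ve (j + (r + 1) * n) then (r : ℤ) else -1) := by
    rw [show j + ((r + 1) * n + 1) = (j + (r + 1) * n) + 1 by ring, psumZ_succ]
  have h3 : psumZ r ve j ≤ psumZ r ve (j + (r + 1) * n) :=
    (goodStart_iff r ((r + 1) * n) ve j).mp hgood ((r + 1) * n) le_rfl
  by_contra hfalse
  have hT : ve (j + (r + 1) * n) = true := by
    cases h : ve (j + (r + 1) * n)
    · exact absurd h hfalse
    · rfl
  rw [hT] at h2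
  simp only [if_true] at h2
  have : (0 : ℤ) ≤ r := Int.natCast_nonneg r
  linarith

/-- The word read from a good start point has `n` `true`s in the window. -/
lemma tcnt_window (r n : ℕ) (v : Fin ((r + 1) * n + 1) → Bool)
    (hv : (Finset.univ.filter (fun i => v i = true)).card = n)
    (j : ℕ)
    (hgood : GoodStart r ((r + 1) * n) (pext ((r + 1) * n + 1) (Nat.succ_pos _) v) j) :
    tcnt (fun i => pext ((r + 1) * n + 1) (Nat.succ_pos _) v (j + i)) ((r + 1) * n) = n := by
  set ve := pext ((r + 1) * n + 1) (Nat.succ_pos _) v with hve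
  have hper := pext_period ((r + 1) * n + 1) (Nat.succ_pos _) v
  have htot := psumZ_pext_total r n v hv
  set sh := fun i => ve (j + i) with hsh
  have h1 : psumZ r sh ((r + 1) * n + 1) = -1 := by
    have := psumZ_shift r ve j ((r + 1) * n + 1)
    rw [psumZ_period r ((r + 1) * n + 1) ve hper, htot] at this
    linarith
  have h2 : psumZ r sh ((r + 1) * n + 1) = psumZ r sh ((r + 1) * n) - 1 := by
    rw [psumZ_succ]
    have hL : sh ((r + 1) * n) = false := last_of_goodStart r n v hv j hgood
    rw [hL]
    simp only [Bool.false_eq_true, if_false]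
    ring
  have h3 : psumZ r sh ((r + 1) * n) = 0 := by linarith
  rw [psumZ_eq_counts] at h3
  have h4 : fcnt sh ((r + 1) * n) = r * tcnt sh ((r + 1) * n) := by
    have : (fcnt sh ((r + 1) * n) : ℤ) = r * tcnt sh ((r + 1) * n) := by linarith
    exact_mod_cast this
  have h5 := tcnt_add_fcnt sh ((r + 1) * n)
  have h6 : (r + 1) * tcnt sh ((r + 1) * n) = (r + 1) * n := by
    have hd1 : (r + 1) * tcnt sh ((r + 1) * n)
        = tcnt sh ((r + 1) * n) + r * tcnt sh ((r + 1) * n) := by ring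
    omega
  exact Nat.eq_of_mul_eq_mul_left (Nat.succ_pos r) h6

/-- Reconstruction: rotating the window word back gives `v`. -/
lemma Frot_window (r n : ℕ) (v : Fin ((r + 1) * n + 1) → Bool)
    (hv : (Finset.univ.filter (fun i => v i = true)).card = n)
    (j : ℕ) (hj : j < (r + 1) * n + 1)
    (hgood : GoodStart r ((r + 1) * n) (pext ((r + 1) * n + 1) (Nat.succ_pos _) v) j) :
    Frot r n (fun i : Fin ((r + 1) * n) =>
        pext ((r + 1) * n + 1) (Nat.succ_pos _) v (j + i.val)) j = v := by
  funext i
  set t := (i.val + (((r + 1) * n + 1) - j)) % ((r + 1) * n + 1) with ht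
  have htm : t < (r + 1) * n + 1 := Nat.mod_lt _ (Nat.succ_pos _)
  have key : uext ((r + 1) * n)
      (fun i : Fin ((r + 1) * n) =>
        pext ((r + 1) * n + 1) (Nat.succ_pos _) v (j + i.val)) t
      = pext ((r + 1) * n + 1) (Nat.succ_pos _) v (j + t) := by
    rcases Nat.lt_or_ge t ((r + 1) * n) with h | h
    · simp [uext, h]
    · have heq : t = (r + 1) * n := by omega
      rw [heq]
      have : uext ((r + 1) * n)
          (fun i : Fin ((r + 1) * n) =>
            pext ((r + 1) * n + 1) (Nat.succ_pos _) v (j + i.val)) ((r + 1) * n)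
          = false := uext_last r n _
      rw [this]
      exact (last_of_goodStart r n v hv j hgood).symm
  show uext ((r + 1) * n) _ t = v i
  rw [key]
  show v ⟨(j + t) % ((r + 1) * n + 1), _⟩ = v i
  have hmod : (j + t) % ((r + 1) * n + 1) = i.val := by
    rw [ht, Nat.add_mod_mod]
    have h9 : j + (i.val + (((r + 1) * n + 1) - j)) = i.val + ((r + 1) * n + 1) := by omega
    rw [h9, Nat.add_mod_right, Nat.mod_eq_of_lt i.isLt]
  simp only [hmod]

/-- The window word read from a good start point is an `r`-Dyck word. -/
lemma isRDyckWord_window (r n : ℕ) (v : Fin ((r + 1) * n + 1) → Bool)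
    (hv : (Finset.univ.filter (fun i => v i = true)).card = n)
    (j : ℕ)
    (hgood : GoodStart r ((r + 1) * n) (pext ((r + 1) * n + 1) (Nat.succ_pos _) v) j) :
    IsRDyckWord r n (fun i : Fin ((r + 1) * n) =>
      pext ((r + 1) * n + 1) (Nat.succ_pos _) v (j + i.val)) := by
  rw [isRDyckWord_iff]
  have hcong : ∀ k ≤ (r + 1) * n, ∀ i < k,
      uext ((r + 1) * n) (fun i : Fin ((r + 1) * n) =>
        pext ((r + 1) * n + 1) (Nat.succ_pos _) v (j + i.val)) i
      = (fun i => pext ((r + 1) * n + 1) (Nat.succ_pos _) v (j + i)) i := by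
    intro k hk i hi
    simp [uext, show i < (r + 1) * n by omega]
  constructor
  · rw [tcnt_congr _ _ ((r + 1) * n) (hcong _ le_rfl)]
    exact tcnt_window r n v hv j hgood
  · intro k hk
    rw [tcnt_congr _ _ k (hcong k hk), fcnt_congr _ _ k (hcong k hk),
      ← psumZ_nonneg_iff]
    exact hgood k hk

/-- The number of generalized Dyck paths from `(0,0)` to `(rn,n)` that never go below the
line `y = x/r` is the Fuss–Catalan number `(1/(rn+1)) * C((r+1)n, n)`. -/
theorem fussCatalan_count_rDyck (r n : ℕ) (hr : 0 < r) (hn : 0 < n) :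
    Nat.card {w : Fin ((r + 1) * n) → Bool // IsRDyckWord r n w} =
      Nat.choose ((r + 1) * n) n / (r * n + 1) := by
  classical
  -- the rotation map
  set F : {w : Fin ((r + 1) * n) → Bool // IsRDyckWord r n w} × Fin ((r + 1) * n + 1) →
      {v : Fin ((r + 1) * n + 1) → Bool //
        (Finset.univ.filter (fun i => v i = true)).card = n} :=
    fun p => ⟨Frot r n p.1.1 p.2.1,
      card_true_Frot r n p.1.1 p.2.1 (by omega)
        (((isRDyckWord_iff r n p.1.1).mp p.1.2).1)⟩ with hF
  have hbij : Function.Bijective F := by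
    constructor
    · rintro ⟨⟨w₁, hw₁⟩, j₁⟩ ⟨⟨w₂, hw₂⟩, j₂⟩ h
      have hv : Frot r n w₁ j₁.val = Frot r n w₂ j₂.val := congrArg Subtype.val h
      have hc₁ := card_true_Frot r n w₁ j₁.val (by omega) (((isRDyckWord_iff r n w₁).mp hw₁).1)
      have hg₁ := goodStart_Frot r n w₁ j₁.val (by omega) (((isRDyckWord_iff r n w₁).mp hw₁).2)
      have hg₂ := goodStart_Frot r n w₂ j₂.val (by omega) (((isRDyckWord_iff r n w₂).mp hw₂).2)
      rw [← hv] at hg₂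
      have hj : j₁.val = j₂.val :=
        goodStart_unique r ((r + 1) * n) _
          (pext_period _ _ _)
          (psumZ_pext_total r n _ hc₁)
          j₁.val j₂.val j₁.isLt j₂.isLt hg₁ hg₂
      have hw : w₁ = w₂ := by
        funext i
        have e₁ := read_Frot r n w₁ j₁.val (by omega) i
        have e₂ := read_Frot r n w₂ j₂.val (by omega) i
        rw [← e₁, ← e₂, hv, hj]
      refine Prod.ext ?_ ?_
      · exact Subtype.ext hw
      · exact Fin.ext hj
    · rintro ⟨v, hv⟩
      obtain ⟨j, hj, hgood⟩ := exists_goodStart r ((r + 1) * n)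
        (pext ((r + 1) * n + 1) (Nat.succ_pos _) v)
        (pext_period _ _ _) (psumZ_pext_total r n v hv)
      refine ⟨⟨⟨fun i : Fin ((r + 1) * n) =>
          pext ((r + 1) * n + 1) (Nat.succ_pos _) v (j + i.val),
          isRDyckWord_window r n v hv j hgood⟩, ⟨j, hj⟩⟩, ?_⟩
      apply Subtype.ext
      exact Frot_window r n v hv j hj hgood
  have hcard : Nat.card ({w : Fin ((r + 1) * n) → Bool // IsRDyckWord r n w} ×
        Fin ((r + 1) * n + 1))
      = Nat.card {v : Fin ((r + 1) * n + 1) → Bool //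
          (Finset.univ.filter (fun i => v i = true)).card = n} :=
    Nat.card_eq_of_bijective F hbij
  -- card of the ambient set of words with n trues
  have hA : Nat.card {v : Fin ((r + 1) * n + 1) → Bool //
        (Finset.univ.filter (fun i => v i = true)).card = n}
      = Nat.choose ((r + 1) * n + 1) n := by
    have e : {v : Fin ((r + 1) * n + 1) → Bool //
          (Finset.univ.filter (fun i => v i = true)).card = n}
        ≃ {s : Finset (Fin ((r + 1) * n + 1)) // s.card = n} :=
      { toFun := fun p => ⟨Finset.univ.filter (fun i => p.1 i = true), p.2⟩
        invFun := fun s => ⟨fun i => decide (i ∈ s.1), by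
          have : (Finset.univ.filter (fun i => decide (i ∈ s.1) = true)) = s.1 := by
            ext i; simp
          rw [this, s.2]⟩
        left_inv := fun p => by
          apply Subtype.ext
          funext i
          by_cases h : p.1 i = true <;> simp [h]
        right_inv := fun s => by
          apply Subtype.ext
          ext i
          simp }
    rw [Nat.card_congr e, Nat.card_eq_fintype_card, Fintype.card_finset_len]
    simp
  have hprod : Nat.card ({w : Fin ((r + 1) * n) → Bool // IsRDyckWord r n w} ×
        Fin ((r + 1) * n + 1))
      = Nat.card {w : Fin ((r + 1) * n) → Bool // IsRDyckWord r n w} * ((r + 1) * n + 1) := by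
    rw [Nat.card_prod]
    simp
  have hD : Nat.card {w : Fin ((r + 1) * n) → Bool // IsRDyckWord r n w} * ((r + 1) * n + 1)
      = Nat.choose ((r + 1) * n + 1) n := by
    rw [← hprod, hcard, hA]
  -- final arithmetic
  have hchoose := Nat.choose_mul_succ_eq ((r + 1) * n) n
  have hsub : (r + 1) * n + 1 - n = r * n + 1 := by
    clear hF hbij hcard hA hprod hD hchoose F
    have : (r + 1) * n = r * n + n := by ring
    omega
  rw [hsub] at hchoose
  have hkey : Nat.choose ((r + 1) * n) n * ((r + 1) * n + 1)
      = (Nat.card {w : Fin ((r + 1) * n) → Bool // IsRDyckWord r n w} * (r * n + 1))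
          * ((r + 1) * n + 1) := by
    rw [hchoose, ← hD]; ring
  have hcancel := Nat.eq_of_mul_eq_mul_right (Nat.succ_pos ((r + 1) * n)) hkey
  rw [hcancel, Nat.mul_div_cancel _ (Nat.succ_pos (r * n))]
end

section
/- The set of generalized chord diagrams of size (r+1)n is in bijection with the set of r-Dyck paths of size n. -/
open Finset


/-- An equivalence relation (set partition) on `Fin n` is non-crossing if there are no
crossing pairs `i < j < k < l` with `i ~ k`, `j ~ l` but `i ≁ j`. -/
def Noncross {n : ℕ} (s : Setoid (Fin n)) : Prop :=
  ∀ i j k l : Fin n, i < j → j < k → k < l → s i k → s j l → s i j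

/-- A generalized chord diagram of size `(r+1)n`: `(r+1)n` points on a line partitioned
into `n` pairwise non-crossing arches (blocks), each arch consisting of `r+1` points. -/
def IsGenChordDiagram (r n m : ℕ) (s : Setoid (Fin m)) : Prop :=
  Noncross s ∧ ∀ x : Fin m, Nat.card {y : Fin m // s x y} = r + 1

namespace GCD

variable {m : ℕ} (r : ℕ) (w : Fin m → Bool)

/-- number of positions `< k` with letter `b`. -/
def cnt (b : Bool) (k : ℕ) : ℕ := (univ.filter fun i : Fin m => (i : ℕ) < k ∧ w i = b).card

/-- number of positions in `[a, c)` with letter `b`. -/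
def cntI (b : Bool) (a c : ℕ) : ℕ :=
  (univ.filter fun i : Fin m => a ≤ (i : ℕ) ∧ (i : ℕ) < c ∧ w i = b).card

/-- height before step `k`. -/
def ht (k : ℕ) : ℤ := r * cnt w true k - cnt w false k

lemma cnt_zero (b : Bool) : cnt w b 0 = 0 := by simp [cnt]

lemma cnt_split (b : Bool) {a c : ℕ} (h : a ≤ c) :
    cnt w b c = cnt w b a + cntI w b a c := by
  classical
  rw [cnt, cnt, cntI, ← card_union_of_disjoint]
  · congr 1
    ext i
    simp only [mem_union, mem_filter, mem_univ, true_and]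
    constructor
    · rintro ⟨h1, h2⟩
      rcases lt_or_ge (i : ℕ) a with h3 | h3
      · exact Or.inl ⟨h3, h2⟩
      · exact Or.inr ⟨h3, h1, h2⟩
    · rintro (⟨h1, h2⟩ | ⟨h1, h2, h3⟩)
      · exact ⟨lt_of_lt_of_le h1 h, h2⟩
      · exact ⟨h2, h3⟩
  · rw [Finset.disjoint_left]
    intro i hi hi'
    simp only [mem_filter] at hi hi'
    omega

lemma cnt_succ (b : Bool) {k : ℕ} (hk : k < m) :
    cnt w b (k + 1) = cnt w b k + if w ⟨k, hk⟩ = b then 1 else 0 := by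
  rw [cnt_split w b (Nat.le_succ k)]
  congr 1
  rw [cntI]
  have he : (univ.filter fun i : Fin m => k ≤ (i : ℕ) ∧ (i : ℕ) < k + 1 ∧ w i = b)
      = if w ⟨k, hk⟩ = b then {⟨k, hk⟩} else ∅ := by
    split <;> rename_i hwk <;> ext i <;>
      simp only [mem_filter, mem_univ, true_and, mem_singleton, notMem_empty, iff_false]
    · constructor
      · rintro ⟨h1, h2, h3⟩
        have : (i : ℕ) = k := by omega
        exact Fin.ext this
      · rintro rfl; exact ⟨le_refl _, Nat.lt_succ_self _, hwk⟩
    · rintro ⟨h1, h2, h3⟩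
      have hik : (i : ℕ) = k := by omega
      have : i = ⟨k, hk⟩ := Fin.ext (by simp [hik])
      rw [this] at h3; exact hwk h3
  rw [he]
  split <;> simp

lemma cnt_of_ge (b : Bool) {k : ℕ} (hk : m ≤ k) : cnt w b k = cnt w b m := by
  unfold cnt
  congr 1
  ext i
  simp only [mem_filter, mem_univ, true_and]
  have := i.isLt
  constructor
  · rintro ⟨_, h2⟩; exact ⟨this, h2⟩
  · rintro ⟨_, h2⟩; exact ⟨lt_of_lt_of_le this hk, h2⟩

lemma ht_zero : ht r w 0 = 0 := by simp [ht, cnt_zero]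

lemma ht_succ {k : ℕ} (hk : k < m) :
    ht r w (k + 1) = ht r w k + (if w ⟨k, hk⟩ = true then (r : ℤ) else -1) := by
  unfold ht
  rw [cnt_succ w true hk, cnt_succ w false hk]
  rcases Bool.eq_false_or_eq_true (w ⟨k, hk⟩) with h | h <;> simp [h] <;> ring

lemma ht_sub {a c : ℕ} (h : a ≤ c) :
    ht r w c - ht r w a = r * cntI w true a c - cntI w false a c := by
  unfold ht
  rw [cnt_split w true h, cnt_split w false h]
  push_cast
  ring


/-- candidate set of openers for position `j`. -/
def cand (j : Fin m) : Finset (Fin m) :=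
  univ.filter fun i => w i = true ∧ i < j ∧ ht r w (i : ℕ) < ht r w (j : ℕ)

/-- the opener of position `j` (itself if `j` is an up step). -/
noncomputable def mate (j : Fin m) : Fin m :=
  if h : w j = false ∧ (cand r w j).Nonempty then (cand r w j).max' h.2 else j

lemma mate_of_true {j : Fin m} (hj : w j = true) : mate r w j = j := by
  rw [mate, dif_neg]
  rintro ⟨h1, _⟩
  rw [hj] at h1
  exact Bool.noConfusion h1

section Dyck

variable (hpos : ∀ k : ℕ, k ≤ m → 0 ≤ ht r w k)
include hpos

lemma w_zero (h0 : 0 < m) : w ⟨0, h0⟩ = true := by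
  by_contra h
  have h1 := ht_succ r w h0
  rw [if_neg h, ht_zero] at h1
  have h2 := hpos 1 h0
  simp at h1
  rw [h1] at h2
  omega

lemma ht_pos_of_false {j : Fin m} (hj : w j = false) : 1 ≤ ht r w (j : ℕ) := by
  have h1 := ht_succ r w j.isLt
  have hj' : (⟨(j : ℕ), j.isLt⟩ : Fin m) = j := Fin.ext rfl
  rw [hj', hj] at h1
  simp only [Bool.false_eq_true, if_neg] at h1
  have := hpos ((j : ℕ) + 1) j.isLt
  simp at h1
  omega

lemma cand_nonempty {j : Fin m} (hj : w j = false) : (cand r w j).Nonempty := by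
  have h0 : 0 < m := lt_of_le_of_lt (Nat.zero_le _) j.isLt
  refine ⟨⟨0, h0⟩, ?_⟩
  simp only [cand, mem_filter, mem_univ, true_and]
  have hw0 := w_zero r w hpos h0
  have hj0 : (j : ℕ) ≠ 0 := by
    intro h
    have : j = ⟨0, h0⟩ := Fin.ext h
    rw [this, hw0] at hj
    exact Bool.noConfusion hj
  refine ⟨hw0, ?_, ?_⟩
  · exact Fin.lt_def.mpr (by simp; omega)
  · rw [ht_zero]
    calc (0 : ℤ) < 1 := one_pos
    _ ≤ ht r w (j : ℕ) := ht_pos_of_false r w hpos hj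

lemma mate_mem_cand {j : Fin m} (hj : w j = false) : mate r w j ∈ cand r w j := by
  rw [mate, dif_pos ⟨hj, cand_nonempty r w hpos hj⟩]
  exact Finset.max'_mem _ _

lemma mate_spec {j : Fin m} (hj : w j = false) :
    w (mate r w j) = true ∧ mate r w j < j ∧
      ht r w ((mate r w j : ℕ)) < ht r w (j : ℕ) := by
  have := mate_mem_cand r w hpos hj
  simp only [cand, mem_filter, mem_univ, true_and] at this
  exact this

lemma le_mate {j : Fin m} (hj : w j = false) {i : Fin m} (hi : i ∈ cand r w j) :
    i ≤ mate r w j := by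
  rw [mate, dif_pos ⟨hj, cand_nonempty r w hpos hj⟩]
  exact Finset.le_max' _ _ hi

lemma mate_le (j : Fin m) : mate r w j ≤ j := by
  rcases Bool.eq_false_or_eq_true (w j) with h | h
  · exact le_of_eq (mate_of_true r w h)
  · exact le_of_lt (mate_spec r w hpos h).2.1

/-- crossing lemma: if the height rises from `x` to `y`, some up step in `[x, y)`
has height below `ht y`. -/
lemma exists_up {x y : Fin m} (hxy : x < y) (hht : ht r w (x : ℕ) < ht r w (y : ℕ)) :
    ∃ p : Fin m, x ≤ p ∧ p < y ∧ w p = true ∧ ht r w (p : ℕ) < ht r w (y : ℕ) := by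
  classical
  set P : Finset (Fin m) :=
    univ.filter (fun p => x ≤ p ∧ p < y ∧ ht r w (p : ℕ) < ht r w (y : ℕ)) with hP
  have hne : P.Nonempty := ⟨x, by simp [hP, le_refl, hxy, hht]⟩
  set p := P.max' hne with hp
  have hmem := P.max'_mem hne
  rw [← hp] at hmem
  simp only [hP, mem_filter, mem_univ, true_and] at hmem
  obtain ⟨hxp, hpy, hhp⟩ := hmem
  refine ⟨p, hxp, hpy, ?_, hhp⟩
  have hpm : (p : ℕ) < m := p.isLt
  have hstep := ht_succ r w hpm
  have hpeq : (⟨(p : ℕ), hpm⟩ : Fin m) = p := Fin.ext rfl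
  rw [hpeq] at hstep
  have hup : ht r w ((p : ℕ)) < ht r w ((p : ℕ) + 1) := by
    rcases eq_or_lt_of_le (Nat.succ_le_of_lt (Fin.lt_def.mp hpy)) with he | hlt
    · have he' : (p : ℕ) + 1 = (y : ℕ) := he
      rw [he']; exact hhp
    · have hq : (p : ℕ) + 1 < m := lt_trans hlt y.isLt
      set q : Fin m := ⟨(p : ℕ) + 1, hq⟩ with hqdef
      have hqP : q ∉ P := by
        intro hqP
        have := P.le_max' q hqP
        rw [← hp] at this
        have : (q : ℕ) ≤ (p : ℕ) := Fin.le_def.mp this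
        simp [hqdef] at this
      simp only [hP, mem_filter, mem_univ, true_and, not_and, not_lt] at hqP
      have h1 : x ≤ q := le_of_lt (lt_of_le_of_lt hxp (Fin.lt_def.mpr (by simp [hqdef])))
      have h2 : q < y := Fin.lt_def.mpr (by simp [hqdef]; omega)
      have := hqP h1 h2
      calc ht r w (p : ℕ) < ht r w (y : ℕ) := hhp
      _ ≤ ht r w ((p:ℕ)+1) := this
  rcases Bool.eq_false_or_eq_true (w p) with h | h
  · exact h
  · rw [h] at hstep
    simp at hstep
    omega

/-- there is no position `q` with `mate j < q ≤ j` whose height is below `ht j`. -/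
lemma no_high {j : Fin m} (hj : w j = false) {q : ℕ} (hq : ((mate r w j : ℕ)) < q)
    (hqj : q ≤ (j : ℕ)) (hht : ht r w q < ht r w (j : ℕ)) : False := by
  rcases eq_or_lt_of_le hqj with he | hlt
  · rw [he] at hht; omega
  · have hqm : q < m := lt_trans hlt j.isLt
    set qf : Fin m := ⟨q, hqm⟩ with hqf
    obtain ⟨p, hp1, hp2, hp3, hp4⟩ := exists_up r w hpos (x := qf) (y := j)
      (Fin.lt_def.mpr hlt) hht
    have hpc : p ∈ cand r w j := by
      simp only [cand, mem_filter, mem_univ, true_and]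
      exact ⟨hp3, hp2, hp4⟩
    have := le_mate r w hpos hj hpc
    have h1 : (p : ℕ) ≤ (mate r w j : ℕ) := Fin.le_def.mp this
    have h2 : q ≤ (p : ℕ) := Fin.le_def.mp hp1
    omega

lemma mate_true_of_ne {j : Fin m} (h : mate r w j ≠ j) : w j = false := by
  rcases Bool.eq_false_or_eq_true (w j) with ht | hf
  · exact absurd (mate_of_true r w ht) h
  · exact hf

lemma w_mate {j : Fin m} : w (mate r w j) = true := by
  rcases Bool.eq_false_or_eq_true (w j) with ht | hf
  · rw [mate_of_true r w ht]; exact ht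
  · exact (mate_spec r w hpos hf).1

lemma noncross_mate : Noncross (Setoid.ker (mate r w)) := by
  intro i j k l hij hjk hkl hik hjl
  rw [Setoid.ker_def] at *
  set a := mate r w i with ha
  set c := mate r w j with hc
  -- k and l are down steps
  have hai : a ≤ i := mate_le r w hpos i
  have hcj : c ≤ j := mate_le r w hpos j
  have hkf : w k = false := by
    refine mate_true_of_ne r w hpos ?_
    rw [← hik]
    exact ne_of_lt (lt_of_le_of_lt hai (lt_trans hij hjk))
  have hlf : w l = false := by
    refine mate_true_of_ne r w hpos ?_
    rw [← hjl]
    exact ne_of_lt (lt_of_le_of_lt hcj (lt_trans hjk hkl))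
  have hak : ht r w (a : ℕ) < ht r w (k : ℕ) := by
    have := (mate_spec r w hpos hkf).2.2; rw [← hik] at this; exact this
  have hwa : w a = true := by rw [hik]; exact w_mate r w hpos
  have hwc : w c = true := by rw [hjl]; exact w_mate r w hpos
  have hcl : ht r w (c : ℕ) < ht r w (l : ℕ) := by
    have := (mate_spec r w hpos hlf).2.2; rw [← hjl] at this; exact this
  by_contra hne
  rcases lt_or_gt_of_ne (fun h : a = c => hne h) with hac | hca
  · -- a < c : c is a better candidate for k unless ht c ≥ ht k
    have h1 : ¬ ht r w (c : ℕ) < ht r w (k : ℕ) := by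
      intro hh
      have hck : c < k := lt_of_le_of_lt hcj hjk
      have : c ∈ cand r w k := by
        simp only [cand, mem_filter, mem_univ, true_and]
        exact ⟨hwc, hck, hh⟩
      have := le_mate r w hpos hkf this
      rw [← hik] at this
      exact absurd hac (not_lt_of_ge this)
    push_neg at h1
    -- height at k is ≤ ht c < ht l : crossing between k and l
    refine no_high r w hpos hlf (q := (k : ℕ)) ?_
      (le_of_lt (Fin.lt_def.mp hkl)) (lt_of_le_of_lt h1 hcl)
    rw [← hjl]
    exact lt_of_le_of_lt (Fin.le_def.mp hcj) (Fin.lt_def.mp hjk)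
  · -- c < a : a is a better candidate for j unless ht a ≥ ht j
    have h1 : ¬ ht r w (a : ℕ) < ht r w (j : ℕ) := by
      intro hh
      rcases Bool.eq_false_or_eq_true (w j) with hjt | hjf
      · -- then c = j, but c < a ≤ i < j
        rw [mate_of_true r w hjt] at hc
        have : a < j := lt_of_le_of_lt hai hij
        rw [hc] at hca
        exact absurd this (not_lt_of_ge (le_of_lt hca))
      · have haj : a < j := lt_of_le_of_lt hai hij
        have : a ∈ cand r w j := by
          simp only [cand, mem_filter, mem_univ, true_and]
          exact ⟨hwa, haj, hh⟩
        have := le_mate r w hpos hjf this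
        rw [← hc] at this
        exact absurd hca (not_lt_of_ge this)
    push_neg at h1
    refine no_high r w hpos hkf (q := (j : ℕ)) ?_
      (le_of_lt (Fin.lt_def.mp hjk)) (lt_of_le_of_lt h1 hak)
    rw [← hik]
    exact lt_of_le_of_lt (Fin.le_def.mp hai) (Fin.lt_def.mp hij)

/-- the down steps assigned to an up step `t`. -/
noncomputable def fib (t : Fin m) : Finset (Fin m) :=
  univ.filter fun j => w j = false ∧ mate r w j = t

lemma card_fib_le {t : Fin m} (hts : w t = true) : (fib r w t).card ≤ r := by
  classical
  have hstep := ht_succ r w t.isLt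
  have hteq : (⟨(t : ℕ), t.isLt⟩ : Fin m) = t := Fin.ext rfl
  rw [hteq, if_pos hts] at hstep
  have hmaps : ∀ j ∈ fib r w t, ht r w (j : ℕ) ∈
      Finset.Icc (ht r w (t : ℕ) + 1) (ht r w (t : ℕ) + r) := by
    intro j hj
    simp only [fib, mem_filter, mem_univ, true_and] at hj
    obtain ⟨hjf, hjm⟩ := hj
    obtain ⟨_, htj, hhtj⟩ := mate_spec r w hpos hjf
    rw [hjm] at htj hhtj
    rw [Finset.mem_Icc]
    constructor
    · omega
    · by_contra hgt
      push_neg at hgt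
      refine no_high r w hpos hjf (q := (t : ℕ) + 1) (by rw [hjm]; omega) ?_ ?_
      · exact Nat.succ_le_of_lt (Fin.lt_def.mp htj)
      · omega
  have hinj : Set.InjOn (fun j : Fin m => ht r w (j : ℕ)) (fib r w t) := by
    intro j hj j' hj' hee
    simp only [Finset.coe_filter, Set.mem_setOf_eq, fib, mem_univ, true_and] at hj hj'
    simp only at hee
    by_contra hne
    -- wlog j < j'
    have key : ∀ u v : Fin m, u < v → w u = false → w v = false →
        mate r w u = t → mate r w v = t → ht r w (u : ℕ) = ht r w (v : ℕ) → False := by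
      intro u v huv huf hvf hum hvm he
      have hstepu := ht_succ r w u.isLt
      have hueq : (⟨(u : ℕ), u.isLt⟩ : Fin m) = u := Fin.ext rfl
      rw [hueq, huf] at hstepu
      simp only [Bool.false_eq_true, if_false] at hstepu
      have htu : t < u := by
        have := (mate_spec r w hpos huf).2.1; rw [hum] at this; exact this
      refine no_high r w hpos hvf (q := (u : ℕ) + 1) ?_ ?_ ?_
      · rw [hvm]; have := Fin.lt_def.mp htu; omega
      · exact Nat.succ_le_of_lt (Fin.lt_def.mp huv)
      · omega
    rcases lt_or_gt_of_ne hne with h | h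
    · exact key j j' h hj.1 hj'.1 hj.2 hj'.2 hee
    · exact key j' j h hj'.1 hj.1 hj'.2 hj.2 hee.symm
  have := Finset.card_le_card_of_injOn _ hmaps hinj
  rwa [Int.card_Icc, show (ht r w (t : ℕ) + r + 1 - (ht r w (t : ℕ) + 1)).toNat = r by omega]
    at this

end Dyck

section DyckFull

variable {n : ℕ} (hpos : ∀ k : ℕ, k ≤ m → 0 ≤ ht r w k)
  (hn : (univ.filter fun i : Fin m => w i = true).card = n) (hm : m = (r + 1) * n)
include hpos hn hm

lemma card_fib_eq {t : Fin m} (hts : w t = true) : (fib r w t).card = r := by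
  classical
  set trues := univ.filter fun i : Fin m => w i = true with htr
  set falses := univ.filter fun i : Fin m => w i = false with hfa
  have hsplit : trues.card + falses.card = m := by
    rw [htr, hfa]
    have := Finset.card_filter_add_card_filter_not
      (s := (univ : Finset (Fin m))) (p := fun i => w i = true)
    rw [Finset.card_univ, Fintype.card_fin] at this
    have h2 : (univ.filter fun a : Fin m => ¬ w a = true) =
        (univ.filter fun i : Fin m => w i = false) := by
      ext a; simp [Bool.not_eq_true]
    rw [h2] at this
    exact this
  have hfalses : falses.card = n * r := by
    have h1 : trues.card = n := hn
    have hm' : m = n * r + n := by rw [hm]; ring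
    omega
  have hfiber : falses.card = ∑ u ∈ trues, (falses.filter fun j => mate r w j = u).card := by
    apply Finset.card_eq_sum_card_fiberwise
    intro j hj
    simp only [hfa, Finset.mem_coe, mem_filter, mem_univ, true_and] at hj
    simp only [htr, Finset.mem_coe, mem_filter, mem_univ, true_and]
    exact (mate_spec r w hpos hj).1
  have hfib_eq : ∀ u : Fin m, (falses.filter fun j => mate r w j = u) = fib r w u := by
    intro u
    ext j
    simp [hfa, fib, and_comm]
  by_contra hne
  have hlt : (fib r w t).card < r := lt_of_le_of_ne (card_fib_le r w hpos hts) hne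
  have htmem : t ∈ trues := by simp [htr, hts]
  have : ∑ u ∈ trues, (falses.filter fun j => mate r w j = u).card < ∑ u ∈ trues, r := by
    apply Finset.sum_lt_sum
    · intro u hu
      rw [hfib_eq u]
      exact card_fib_le r w hpos (by simpa [htr] using hu)
    · exact ⟨t, htmem, by rw [hfib_eq t]; exact hlt⟩
  rw [Finset.sum_const, smul_eq_mul, hn] at this
  omega

lemma card_block (x : Fin m) :
    (univ.filter fun y => mate r w y = mate r w x).card = r + 1 := by
  classical
  set t := mate r w x with htdef
  have hts : w t = true := w_mate r w hpos
  have hB : (univ.filter fun y => mate r w y = t) = insert t (fib r w t) := by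
    ext y
    simp only [mem_filter, mem_univ, true_and, Finset.mem_insert, fib]
    constructor
    · intro hy
      rcases Bool.eq_false_or_eq_true (w y) with h | h
      · left; rw [← hy, mate_of_true r w h]
      · right; simp [h, hy]
    · rintro (rfl | hy)
      · exact mate_of_true r w hts
      · exact hy.2
  rw [hB, Finset.card_insert_of_notMem, card_fib_eq r w hpos hn hm hts]
  simp only [fib, mem_filter, mem_univ, true_and, not_and]
  intro h
  rw [hts] at h
  exact Bool.noConfusion h

end DyckFull

section Diagram

variable (s : Setoid (Fin m))

/-- word associated to a diagram: `true` at block minima. -/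
noncomputable def wrd : Fin m → Bool := fun i =>
  @decide (∀ y : Fin m, s.r i y → i ≤ y) (Classical.propDecidable _)

/-- the block of a point. -/
noncomputable def blk (x : Fin m) : Finset (Fin m) :=
  @Finset.filter _ (fun y => s.r x y) (fun _ => Classical.propDecidable _) univ

lemma mem_blk {x y : Fin m} : y ∈ blk s x ↔ s.r x y := by
  simp [blk]

lemma blk_nonempty (x : Fin m) : (blk s x).Nonempty := ⟨x, (mem_blk s).mpr (s.refl' x)⟩

/-- the minimum of the block of a point. -/
noncomputable def bmin (x : Fin m) : Fin m := (blk s x).min' (blk_nonempty s x)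

lemma bmin_rel (x : Fin m) : s.r x (bmin s x) :=
  (mem_blk s).mp ((blk s x).min'_mem (blk_nonempty s x))

lemma bmin_le {x y : Fin m} (h : s.r x y) : bmin s x ≤ y :=
  Finset.min'_le _ _ ((mem_blk s).mpr h)

lemma bmin_le_self (x : Fin m) : bmin s x ≤ x := bmin_le s (s.refl' x)

lemma blk_eq_of_rel {x y : Fin m} (h : s.r x y) : blk s x = blk s y := by
  ext z
  rw [mem_blk, mem_blk]
  exact ⟨fun hz => s.trans' (s.symm' h) hz, fun hz => s.trans' h hz⟩

lemma bmin_eq_of_rel {x y : Fin m} (h : s.r x y) : bmin s x = bmin s y := by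
  unfold bmin
  congr 1
  exact blk_eq_of_rel s h

lemma bmin_idem (x : Fin m) : bmin s (bmin s x) = bmin s x :=
  (bmin_eq_of_rel s (bmin_rel s x)).symm

lemma wrd_true_iff {i : Fin m} : wrd s i = true ↔ bmin s i = i := by
  unfold wrd
  rw [@decide_eq_true_iff _ (Classical.propDecidable _)]
  constructor
  · intro h
    exact le_antisymm (bmin_le_self s i) (h _ (bmin_rel s i))
  · intro h y hy
    rw [← h]
    exact bmin_le s hy

lemma wrd_false_iff {i : Fin m} : wrd s i = false ↔ bmin s i ≠ i := by
  rw [Bool.eq_false_iff, Ne, wrd_true_iff]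

lemma wrd_bmin_true (x : Fin m) : wrd s (bmin s x) = true :=
  (wrd_true_iff s).mpr (bmin_idem s x)

lemma wrd_false_lt {i : Fin m} (h : wrd s i = false) : bmin s i < i :=
  lt_of_le_of_ne (bmin_le_self s i) ((wrd_false_iff s).mp h)

end Diagram

section DiagramCount

variable (s : Setoid (Fin m)) (hnc : Noncross s) (hcard : ∀ x, (blk s x).card = r + 1)
  (hr : 0 < r)

/-- fibers of `bmin` over the set of down steps are small. -/
lemma fiber_subset_erase (A : Finset (Fin m)) (hA : ∀ j ∈ A, wrd s j = false) (t : Fin m) :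
    A.filter (fun j => bmin s j = t) ⊆ (blk s t).erase t := by
  classical
  intro j hj
  rw [Finset.mem_filter] at hj
  obtain ⟨hjA, hbj⟩ := hj
  rw [Finset.mem_erase, mem_blk]
  constructor
  · intro he
    have h1 := hA _ hjA
    rw [wrd_false_iff] at h1
    exact h1 (hbj.trans he.symm)
  · exact s.symm' (hbj ▸ bmin_rel s j)

include hcard in
lemma card_fiber_le (A : Finset (Fin m)) (hA : ∀ j ∈ A, wrd s j = false) (t : Fin m) :
    (A.filter (fun j => bmin s j = t)).card ≤ r := by
  classical
  have := Finset.card_le_card (fiber_subset_erase s A hA t)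
  rwa [Finset.card_erase_of_mem ((mem_blk s).mpr (s.refl' t)), hcard t,
    Nat.add_sub_cancel] at this

include hcard in
lemma cnt_false_le (k : ℕ) :
    cnt (wrd s) false k ≤ r * cnt (wrd s) true k := by
  classical
  unfold cnt
  have hmaps : ∀ j ∈ univ.filter (fun i : Fin m => (i : ℕ) < k ∧ wrd s i = false),
      bmin s j ∈ univ.filter (fun i : Fin m => (i : ℕ) < k ∧ wrd s i = true) := by
    intro j hj
    simp only [mem_filter, mem_univ, true_and] at hj ⊢
    exact ⟨lt_of_le_of_lt (Fin.le_def.mp (bmin_le_self s j)) hj.1, wrd_bmin_true s j⟩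
  rw [Finset.card_eq_sum_card_fiberwise hmaps]
  calc _ ≤ (univ.filter (fun i : Fin m => (i : ℕ) < k ∧ wrd s i = true)).card • r := by
        apply Finset.sum_le_card_nsmul
        intro t _
        apply card_fiber_le r s hcard
        intro j hj
        simp only [mem_filter, mem_univ, true_and] at hj
        exact hj.2
  _ = _ := by rw [smul_eq_mul, mul_comm]

include hcard in
lemma hpos_wrd : ∀ k : ℕ, k ≤ m → 0 ≤ ht r (wrd s) k := by
  intro k _
  rw [ht]
  have := cnt_false_le r s hcard k
  have h2 : (cnt (wrd s) false k : ℤ) ≤ r * cnt (wrd s) true k := by exact_mod_cast this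
  omega

include hnc hcard hr in
lemma ht_bmin_lt {j : Fin m} (hj : wrd s j = false) :
    ht r (wrd s) ((bmin s j : ℕ)) < ht r (wrd s) ((j : ℕ)) := by
  classical
  set i0 := bmin s j with hi0
  have hi0j : i0 < j := wrd_false_lt s hj
  have hts := ht_sub r (wrd s) (le_of_lt (Fin.lt_def.mp hi0j))
  have hkey : cntI (wrd s) false (i0 : ℕ) (j : ℕ) < r * cntI (wrd s) true (i0 : ℕ) (j : ℕ) := by
    unfold cntI
    set Fs := univ.filter
      (fun p : Fin m => (i0 : ℕ) ≤ (p : ℕ) ∧ (p : ℕ) < (j : ℕ) ∧ wrd s p = false) with hFs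
    set Ts := univ.filter
      (fun p : Fin m => (i0 : ℕ) ≤ (p : ℕ) ∧ (p : ℕ) < (j : ℕ) ∧ wrd s p = true) with hTs
    have hFsfalse : ∀ p ∈ Fs, wrd s p = false := by
      intro p hp; simp only [hFs, mem_filter, mem_univ, true_and] at hp; exact hp.2.2
    have hmaps : ∀ p ∈ Fs, bmin s p ∈ Ts := by
      intro p hp
      simp only [hFs, mem_filter, mem_univ, true_and] at hp
      obtain ⟨hp1, hp2, hp3⟩ := hp
      simp only [hTs, mem_filter, mem_univ, true_and]
      refine ⟨?_, lt_of_le_of_lt (Fin.le_def.mp (bmin_le_self s p)) hp2, wrd_bmin_true s p⟩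
      -- i0 ≤ bmin p, by noncrossing
      by_contra hlt
      push_neg at hlt
      have hbpi0 : bmin s p < i0 := Fin.lt_def.mpr hlt
      have hpi0 : i0 < p := by
        rcases lt_or_eq_of_le (Fin.le_def.mpr hp1) with h | h
        · exact h
        · exfalso
          rw [← h] at hp3
          rw [hi0] at hp3
          rw [wrd_bmin_true s j] at hp3
          exact Bool.noConfusion hp3
      have hpj : p < j := Fin.lt_def.mpr hp2
      have hrel := hnc (bmin s p) i0 p j hbpi0 hpi0 hpj
        (s.symm' (bmin_rel s p)) (s.symm' (hi0 ▸ bmin_rel s j))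
      have heq : bmin s p = i0 := by
        have hh : bmin s (bmin s p) = bmin s i0 := bmin_eq_of_rel s hrel
        rw [bmin_idem] at hh
        rw [hi0, bmin_idem, ← hi0] at hh
        exact hh
      exact absurd heq (ne_of_lt hbpi0)
    rw [Finset.card_eq_sum_card_fiberwise hmaps]
    have hi0Ts : i0 ∈ Ts := by
      simp only [hTs, mem_filter, mem_univ, true_and]
      exact ⟨le_refl _, Fin.lt_def.mp hi0j, hi0 ▸ wrd_bmin_true s j⟩
    rw [← Finset.sum_erase_add _ _ hi0Ts]
    obtain ⟨T', hT'⟩ : ∃ T', Ts.card = T' + 1 :=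
      ⟨Ts.card - 1, by have := Finset.card_pos.mpr ⟨i0, hi0Ts⟩; omega⟩
    have hb1 : ∑ t ∈ Ts.erase i0, (Fs.filter (fun j => bmin s j = t)).card ≤ T' * r := by
      calc _ ≤ (Ts.erase i0).card • r :=
            Finset.sum_le_card_nsmul _ _ _ (fun t _ => card_fiber_le r s hcard Fs hFsfalse t)
      _ = T' * r := by rw [Finset.card_erase_of_mem hi0Ts, hT', smul_eq_mul]; simp
    have hb2 : (Fs.filter (fun p => bmin s p = i0)).card ≤ r - 1 := by
      have hsub : Fs.filter (fun p => bmin s p = i0) ⊆ ((blk s i0).erase i0).erase j := by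
        intro p hp
        have h1 := fiber_subset_erase s Fs hFsfalse i0 hp
        rw [Finset.mem_erase]
        refine ⟨?_, h1⟩
        rw [Finset.mem_filter] at hp
        have := hFsfalse p hp.1
        simp only [hFs, mem_filter, mem_univ, true_and] at hp
        intro he
        rw [he] at hp
        omega
      have hj_mem : j ∈ (blk s i0).erase i0 := by
        rw [Finset.mem_erase, mem_blk]
        exact ⟨ne_of_gt hi0j, s.symm' (hi0 ▸ bmin_rel s j)⟩
      have := Finset.card_le_card hsub
      rwa [Finset.card_erase_of_mem hj_mem,
        Finset.card_erase_of_mem ((mem_blk s).mpr (s.refl' i0)), hcard i0,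
        Nat.add_sub_cancel] at this
    have he1 : r * (T' + 1) = T' * r + r := by ring
    rw [hT']
    omega
  have h1 : (cntI (wrd s) false (i0 : ℕ) (j : ℕ) : ℤ)
      < r * cntI (wrd s) true (i0 : ℕ) (j : ℕ) := by exact_mod_cast hkey
  omega

include hnc hcard in
lemma ht_le_of_between {j i : Fin m} (hj : wrd s j = false) (hi : wrd s i = true)
    (h1 : bmin s j < i) (h2 : i < j) :
    ht r (wrd s) ((j : ℕ)) ≤ ht r (wrd s) ((i : ℕ)) := by
  classical
  have hts := ht_sub r (wrd s) (le_of_lt (Fin.lt_def.mp h2))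
  have hkey : r * cntI (wrd s) true (i : ℕ) (j : ℕ) ≤ cntI (wrd s) false (i : ℕ) (j : ℕ) := by
    unfold cntI
    set Fs := univ.filter
      (fun p : Fin m => (i : ℕ) ≤ (p : ℕ) ∧ (p : ℕ) < (j : ℕ) ∧ wrd s p = false) with hFs
    set Ts := univ.filter
      (fun p : Fin m => (i : ℕ) ≤ (p : ℕ) ∧ (p : ℕ) < (j : ℕ) ∧ wrd s p = true) with hTs
    have hTtrue : ∀ t ∈ Ts, bmin s t = t := by
      intro t ht'
      simp only [hTs, mem_filter, mem_univ, true_and] at ht'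
      exact (wrd_true_iff s).mp ht'.2.2
    have hdisj : ∀ t ∈ Ts, ∀ t' ∈ Ts, t ≠ t' →
        Disjoint ((blk s t).erase t) ((blk s t').erase t') := by
      intro t ht' t' ht'' hne
      rw [Finset.disjoint_left]
      intro p hp hp'
      rw [Finset.mem_erase, mem_blk] at hp hp'
      apply hne
      have e1 : bmin s p = bmin s t := (bmin_eq_of_rel s (s.symm' hp.2))
      have e2 : bmin s p = bmin s t' := (bmin_eq_of_rel s (s.symm' hp'.2))
      rw [hTtrue t ht'] at e1
      rw [hTtrue t' ht''] at e2
      rw [← e1, ← e2]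
    have hsub : Ts.biUnion (fun t => (blk s t).erase t) ⊆ Fs := by
      intro p hp
      rw [Finset.mem_biUnion] at hp
      obtain ⟨t, htTs, hp⟩ := hp
      rw [Finset.mem_erase, mem_blk] at hp
      obtain ⟨hpt, hrel⟩ := hp
      have hbt : bmin s t = t := hTtrue t htTs
      have hbp : bmin s p = t := by
        rw [← hbt]; exact bmin_eq_of_rel s (s.symm' hrel)
      simp only [hTs, mem_filter, mem_univ, true_and] at htTs
      obtain ⟨hti, htj, htw⟩ := htTs
      have hpf : wrd s p = false := by
        rw [wrd_false_iff, hbp]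
        exact fun h => hpt h.symm
      have htp : (t : ℕ) ≤ (p : ℕ) := by
        rw [← hbp]; exact Fin.le_def.mp (bmin_le_self s p)
      simp only [hFs, mem_filter, mem_univ, true_and]
      refine ⟨le_trans hti htp, ?_, hpf⟩
      -- p < j by noncrossing
      by_contra hge
      push_neg at hge
      have hjp : j < p := by
        rcases lt_or_eq_of_le hge with h | h
        · exact Fin.lt_def.mpr h
        · exfalso
          have hjp' : j = p := Fin.ext h
          rw [← hjp'] at hbp
          have hlt' : bmin s j < t := lt_of_lt_of_le h1 (Fin.le_def.mpr hti)
          exact absurd hbp (ne_of_lt hlt')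
      have hbjt : bmin s j < t := lt_of_lt_of_le h1 (Fin.le_def.mpr hti)
      have htj' : t < j := Fin.lt_def.mpr htj
      have hrel2 := hnc (bmin s j) t j p hbjt htj' hjp
        (s.symm' (bmin_rel s j)) hrel
      have h3 := bmin_eq_of_rel s hrel2
      rw [bmin_idem] at h3
      rw [hbt] at h3
      exact absurd h3 (ne_of_lt hbjt)
    have hcardU : (Ts.biUnion (fun t => (blk s t).erase t)).card = Ts.card * r := by
      rw [Finset.card_biUnion hdisj]
      rw [Finset.sum_congr rfl (fun t _ => ?_), Finset.sum_const, smul_eq_mul]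
      rw [Finset.card_erase_of_mem ((mem_blk s).mpr (s.refl' t)), hcard t,
        Nat.add_sub_cancel]
    have := Finset.card_le_card hsub
    rw [hcardU] at this
    rw [mul_comm]
    exact this
  have h1' : (r : ℤ) * cntI (wrd s) true (i : ℕ) (j : ℕ)
      ≤ cntI (wrd s) false (i : ℕ) (j : ℕ) := by exact_mod_cast hkey
  omega

include hnc hcard hr in
lemma mate_wrd (j : Fin m) : mate r (wrd s) j = bmin s j := by
  have hpos := hpos_wrd r s hcard
  rcases Bool.eq_false_or_eq_true (wrd s j) with hjt | hjf
  · rw [mate_of_true r (wrd s) hjt, ((wrd_true_iff s).mp hjt)]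
  · have hc : bmin s j ∈ cand r (wrd s) j := by
      simp only [cand, mem_filter, mem_univ, true_and]
      exact ⟨wrd_bmin_true s j, wrd_false_lt s hjf, ht_bmin_lt r s hnc hcard hr hjf⟩
    have h1 := le_mate r (wrd s) hpos hjf hc
    have hmem := mate_mem_cand r (wrd s) hpos hjf
    simp only [cand, mem_filter, mem_univ, true_and] at hmem
    obtain ⟨hmt, hmj, hmh⟩ := hmem
    refine le_antisymm ?_ h1
    by_contra hgt
    push_neg at hgt
    have := ht_le_of_between r s hnc hcard hjf hmt hgt hmj
    omega

include hcard in
lemma card_trues {n : ℕ} (hm : m = (r + 1) * n) :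
    (univ.filter fun i : Fin m => wrd s i = true).card = n := by
  classical
  have himg : (univ.filter fun i : Fin m => wrd s i = true) = univ.image (bmin s) := by
    ext x
    simp only [mem_filter, mem_univ, true_and, Finset.mem_image]
    rw [wrd_true_iff]
    constructor
    · intro h; exact ⟨x, h⟩
    · rintro ⟨y, rfl⟩; exact bmin_idem s y
  have hmaps : ∀ x ∈ (univ : Finset (Fin m)), bmin s x ∈ univ.image (bmin s) :=
    fun x _ => Finset.mem_image_of_mem _ (mem_univ x)
  have hsum := Finset.card_eq_sum_card_fiberwise hmaps
  have hfib : ∀ t ∈ univ.image (bmin s),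
      (univ.filter fun x => bmin s x = t) = blk s t := by
    intro t htm
    rw [Finset.mem_image] at htm
    obtain ⟨y, _, rfl⟩ := htm
    ext z
    rw [mem_filter, mem_blk]
    simp only [mem_univ, true_and]
    constructor
    · intro h; rw [← h]; exact s.symm' (bmin_rel s z)
    · intro h; exact (bmin_eq_of_rel s (s.symm' h)).trans (bmin_idem s y)
  rw [Finset.card_univ, Fintype.card_fin] at hsum
  rw [Finset.sum_congr rfl (fun t ht => by rw [hfib t ht, hcard t])] at hsum
  rw [Finset.sum_const, smul_eq_mul] at hsum
  rw [himg]
  have h2 : n * (r + 1) = (univ.image (bmin s)).card * (r + 1) := by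
    rw [mul_comm n (r + 1), ← hm]; exact hsum
  exact (Nat.eq_of_mul_eq_mul_right (Nat.succ_pos r) h2).symm

end DiagramCount

end GCD

namespace GCD

variable {r n : ℕ}

lemma blk_card_of {m : ℕ} {s : Setoid (Fin m)} (hs : IsGenChordDiagram r n m s) :
    ∀ x, (blk s x).card = r + 1 := by
  classical
  intro x
  have h1 := hs.2 x
  rw [Nat.card_eq_fintype_card, Fintype.card_subtype] at h1
  rw [← h1, blk]

lemma isRDyck_wrd {s : Setoid (Fin ((r + 1) * n))}
    (hs : IsGenChordDiagram r n ((r + 1) * n) s) : IsRDyckWord r n (wrd s) := by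
  have hcard := blk_card_of hs
  constructor
  · exact card_trues r s hcard rfl
  · intro k _
    exact cnt_false_le r s hcard k

lemma isGCD_ker (hr : 0 < r) {w : Fin ((r + 1) * n) → Bool} (hw : IsRDyckWord r n w) :
    IsGenChordDiagram r n ((r + 1) * n) (Setoid.ker (mate r w)) := by
  classical
  have hpos : ∀ k : ℕ, k ≤ (r + 1) * n → 0 ≤ ht r w k := by
    intro k hk
    have h1 := hw.2 k hk
    rw [ht]
    unfold cnt
    have h2 : ((Finset.univ.filter
        (fun i : Fin ((r + 1) * n) => (i : ℕ) < k ∧ w i = false)).card : ℤ) ≤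
        (r : ℤ) * (Finset.univ.filter
        (fun i : Fin ((r + 1) * n) => (i : ℕ) < k ∧ w i = true)).card := by
      exact_mod_cast h1
    omega
  constructor
  · exact noncross_mate r w hpos
  · intro x
    have hb := card_block r w hpos hw.1 rfl x
    rw [Nat.card_eq_fintype_card, Fintype.card_subtype]
    have hset : (univ.filter fun y => (Setoid.ker (mate r w)) x y)
        = (univ.filter fun y => mate r w y = mate r w x) := by
      apply Finset.filter_congr
      intro y _
      rw [Setoid.ker_def]
      exact ⟨fun h => h.symm, fun h => h.symm⟩
    rw [hset]
    exact hb

lemma ker_wrd_eq {s : Setoid (Fin ((r + 1) * n))} (hr : 0 < r)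
    (hs : IsGenChordDiagram r n ((r + 1) * n) s) :
    Setoid.ker (mate r (wrd s)) = s := by
  have hcard := blk_card_of hs
  apply Setoid.ext
  intro x y
  rw [Setoid.ker_def, mate_wrd r s hs.1 hcard hr x, mate_wrd r s hs.1 hcard hr y]
  constructor
  · intro h
    exact s.trans' (bmin_rel s x) (h ▸ s.symm' (bmin_rel s y))
  · intro h
    exact bmin_eq_of_rel s h

lemma wrd_ker_eq (hr : 0 < r) {w : Fin ((r + 1) * n) → Bool} (hw : IsRDyckWord r n w) :
    wrd (Setoid.ker (mate r w)) = w := by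
  classical
  have hpos : ∀ k : ℕ, k ≤ (r + 1) * n → 0 ≤ ht r w k := by
    intro k hk
    have h1 := hw.2 k hk
    rw [ht]
    unfold cnt
    have h2 : ((Finset.univ.filter
        (fun i : Fin ((r + 1) * n) => (i : ℕ) < k ∧ w i = false)).card : ℤ) ≤
        (r : ℤ) * (Finset.univ.filter
        (fun i : Fin ((r + 1) * n) => (i : ℕ) < k ∧ w i = true)).card := by
      exact_mod_cast h1
    omega
  set sd := Setoid.ker (mate r w) with hsd
  funext i
  have hps : bmin sd i = mate r w i := by
    apply le_antisymm
    · apply Finset.min'_le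
      rw [mem_blk]
      show mate r w i = mate r w (mate r w i)
      rw [mate_of_true r w (w_mate r w hpos)]
    · apply Finset.le_min'
      intro y hy
      rw [mem_blk] at hy
      have h3 : mate r w i = mate r w y := hy
      rw [h3]
      exact mate_le r w hpos y
  rcases Bool.eq_false_or_eq_true (w i) with h | h
  · rw [h, (wrd_true_iff sd).mpr]
    rw [hps]
    exact mate_of_true r w h
  · rw [h]
    apply (wrd_false_iff sd).mpr
    rw [hps]
    exact ne_of_lt (mate_spec r w hpos h).2.1

end GCD

/-- The set of generalized chord diagrams of size `(r+1)n` is in bijection with the set of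
`r`-Dyck paths of size `n`. -/
theorem genChordDiagram_equiv_rDyck (r n : ℕ) (hr : 0 < r) :
    Nonempty
      ({s : Setoid (Fin ((r + 1) * n)) // IsGenChordDiagram r n ((r + 1) * n) s} ≃
        {w : Fin ((r + 1) * n) → Bool // IsRDyckWord r n w}) := by
  constructor
  exact
    { toFun := fun sd => ⟨GCD.wrd sd.1, GCD.isRDyck_wrd sd.2⟩
      invFun := fun wd => ⟨Setoid.ker (GCD.mate r wd.1), GCD.isGCD_ker hr wd.2⟩
      left_inv := fun sd => Subtype.ext (GCD.ker_wrd_eq hr sd.2)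
      right_inv := fun wd => Subtype.ext (GCD.wrd_ker_eq hr wd.2) }
end

section
/- The Kreweras complement ρ on non-crossing partitions of [n] satisfies ρ^{2n} = identity. -/
/-- Position of the unprimed point `i` in the interleaved (circular) order
`1', 1, 2', 2, …, n', n` of the `2n` points. -/
def posU {n : ℕ} (i : Fin n) : ℕ := 2 * i.val + 1

/-- Position of the primed point `i'` in the interleaved order (it lies between `i-1` and `i`). -/
def posP {n : ℕ} (i : Fin n) : ℕ := 2 * i.val

/-- No chord of `π` (drawn on the unprimed points) crosses a chord of `σ`
(drawn on the primed points) in the interleaved circular order. -/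
def NoMixedCross {n : ℕ} (π σ : Setoid (Fin n)) : Prop :=
  ∀ i k j l : Fin n, π i k → σ j l →
    ¬ (posU i < posP j ∧ posP j < posU k ∧ posU k < posP l) ∧
    ¬ (posP j < posU i ∧ posU i < posP l ∧ posP l < posU k)

/-- `σ` is the Kreweras complement of the non-crossing partition `π`: it is the coarsest
partition of the primed points which is non-crossing and whose chords do not cross those
of `π`; equivalently, its blocks are the sets of primed points lying in a common region
of the picture of `π`. -/
def IsKrewerasCompl {n : ℕ} (π σ : Setoid (Fin n)) : Prop :=
  Noncross σ ∧ NoMixedCross π σ ∧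
    ∀ σ' : Setoid (Fin n), Noncross σ' → NoMixedCross π σ' → σ' ≤ σ

def KSep (u v p : ℕ) : Prop := (u < p ∧ p < v) ∨ (v < p ∧ p < u)

def KAlt {n : ℕ} (i k j l : Fin n) : Prop :=
  ¬ (KSep (posU i) (posU k) (posP j) ↔ KSep (posU i) (posU k) (posP l))

def Kc {n : ℕ} (π : Setoid (Fin n)) : Setoid (Fin n) where
  r j l := ∀ i k : Fin n, π i k → ¬ KAlt i k j l
  iseqv := by
    refine ⟨fun j i k _ => by simp [KAlt], fun h i k hik => ?_, fun h1 h2 i k hik => ?_⟩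
    · have h' := h i k hik
      simp only [KAlt, not_not] at h' ⊢; exact h'.symm
    · have h1' := h1 i k hik; have h2' := h2 i k hik
      simp only [KAlt, not_not] at h1' h2' ⊢; exact h1'.trans h2'

lemma cross_to_alt {n} {i k j l : Fin n} :
    (posU i < posP j ∧ posP j < posU k ∧ posU k < posP l) ∨
    (posP j < posU i ∧ posU i < posP l ∧ posP l < posU k) → KAlt i k j l := by
  simp only [KAlt, KSep, posU, posP]; omega

lemma alt_cases {n} {i k j l : Fin n} (h : KAlt i k j l) :
    ((posU i < posP j ∧ posP j < posU k ∧ posU k < posP l) ∨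
    (posP j < posU i ∧ posU i < posP l ∧ posP l < posU k)) ∨
    ((posU k < posP j ∧ posP j < posU i ∧ posU i < posP l) ∨
    (posP j < posU k ∧ posU k < posP l ∧ posP l < posU i)) ∨
    ((posU i < posP l ∧ posP l < posU k ∧ posU k < posP j) ∨
    (posP l < posU i ∧ posU i < posP j ∧ posP j < posU k)) ∨
    ((posU k < posP l ∧ posP l < posU i ∧ posU i < posP j) ∨
    (posP l < posU k ∧ posU k < posP j ∧ posP j < posU i)) := by
  simp only [KAlt, KSep, posU, posP] at h ⊢; omega

lemma noncross_kc {n} (π : Setoid (Fin n)) : Noncross (Kc π) := by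
  intro i j k l hij hjk hkl hik hjl a b hab
  have h1 := hik a b hab
  have h2 := hjl a b hab
  have hij' : i.val < j.val := hij
  have hjk' : j.val < k.val := hjk
  have hkl' : k.val < l.val := hkl
  simp only [KAlt, KSep, posU, posP, not_not] at h1 h2 ⊢
  omega

lemma kc_r {n : ℕ} (π : Setoid (Fin n)) (j l : Fin n) :
    Kc π j l ↔ ∀ i k : Fin n, π i k → ¬ KAlt i k j l := Iff.rfl

lemma nomix_kc {n} (π : Setoid (Fin n)) : NoMixedCross π (Kc π) := by
  intro i k j l hik hjl
  have h := (kc_r π j l).mp hjl i k hik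
  exact ⟨fun hc => h (cross_to_alt (Or.inl hc)), fun hc => h (cross_to_alt (Or.inr hc))⟩

lemma le_kc {n} {π σ' : Setoid (Fin n)} (h : NoMixedCross π σ') : σ' ≤ Kc π := by
  rw [Setoid.le_def]
  intro j l hjl
  rw [kc_r]
  intro i k hik halt
  rcases alt_cases halt with (hc | hc) | (hc | hc) | (hc | hc) | (hc | hc)
  · exact (h i k j l hik hjl).1 hc
  · exact (h i k j l hik hjl).2 hc
  · exact (h k i j l (π.symm' hik) hjl).1 hc
  · exact (h k i j l (π.symm' hik) hjl).2 hc
  · exact (h i k l j hik (σ'.symm' hjl)).1 hc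
  · exact (h i k l j hik (σ'.symm' hjl)).2 hc
  · exact (h k i l j (π.symm' hik) (σ'.symm' hjl)).1 hc
  · exact (h k i l j (π.symm' hik) (σ'.symm' hjl)).2 hc

lemma kc_spec {n} (π : Setoid (Fin n)) : IsKrewerasCompl π (Kc π) :=
  ⟨noncross_kc π, nomix_kc π, fun _ _ h => le_kc h⟩

lemma kc_unique {n} {π σ : Setoid (Fin n)} (h : IsKrewerasCompl π σ) : σ = Kc π :=
  le_antisymm (le_kc h.2.1) (h.2.2 (Kc π) (noncross_kc π) (nomix_kc π))

def pr {n : ℕ} (j : Fin n) : Fin n :=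
  ⟨if j.val = 0 then n - 1 else j.val - 1, by have := j.isLt; split <;> omega⟩

lemma alt_rot {n} (a b j l : Fin n) : KAlt a b j l ↔ KAlt (pr j) (pr l) a b := by
  have ha := a.isLt; have hb := b.isLt; have hj := j.isLt; have hl := l.isLt
  simp only [KAlt, KSep, posU, posP, pr]
  split_ifs <;> omega

def KSat {n : ℕ} (π : Setoid (Fin n)) (a b : ℕ) : Prop :=
  ∀ u v : Fin n, π u v → ((a ≤ u.val ∧ u.val ≤ b) ↔ (a ≤ v.val ∧ v.val ≤ b))

lemma sat_kc {n} {π : Setoid (Fin n)} (j l : Fin n) (hjl : j.val < l.val)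
    (hsat : KSat π j.val (l.val - 1)) : Kc π j l := by
  rw [kc_r]
  intro u v huv
  have h := hsat u v huv
  have hu := u.isLt; have hv := v.isLt
  simp only [KAlt, KSep, posU, posP, not_not]
  omega

lemma star_lt {n} {π : Setoid (Fin n)} (NC : Noncross π) (x y : Fin n)
    (hxy : x.val < y.val)
    (H : ∀ j l : Fin n, Kc π j l → ¬ KAlt x y j l) : π x y := by
  classical
  have hyn := y.isLt
  have hxn := x.isLt
  -- No saturated interval splits x from y
  have NS : ∀ a b : ℕ, a ≤ b → b < n → KSat π a b →
      ((a ≤ x.val ∧ x.val ≤ b) ↔ (a ≤ y.val ∧ y.val ≤ b)) := by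
    intro a b hab hbn hsat
    rcases Nat.lt_or_ge b (n - 1) with hb | hb
    · have hkc : Kc π ⟨a, by omega⟩ ⟨b + 1, by omega⟩ :=
        sat_kc _ _ (by simp; omega) (by simpa using hsat)
      have h := H _ _ hkc
      simp only [KAlt, KSep, posU, posP, not_not] at h
      omega
    · rcases Nat.eq_zero_or_pos a with rfl | ha
      · omega
      · have hsat0 : KSat π 0 (a - 1) := by
          intro u v huv
          have := hsat u v huv
          have := u.isLt; have := v.isLt
          omega
        have hkc : Kc π ⟨0, by omega⟩ ⟨a, by omega⟩ := sat_kc _ _ (by simpa using ha) (by simpa using hsat0)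
        have h := H _ _ hkc
        simp only [KAlt, KSep, posU, posP, not_not] at h
        omega
  -- main induction on interval length
  have G : ∀ len a b : ℕ, a ≤ x.val → y.val ≤ b → b < n →
      KSat π a b → b - a ≤ len → π x y := by
    intro len
    induction len with
    | zero => intro a b h1 h3 h4 _ h6; omega
    | succ len ih =>
      intro a b hax hyb hbn hsat hlen
      set A : Fin n := ⟨a, by omega⟩ with hA
      -- step: from a point z in [a,b] not related to A, find a strictly smaller
      -- saturated subinterval containing z
      have step : ∀ z : Fin n, a ≤ z.val → z.val ≤ b → ¬ π A z →
          ∃ a' b' : ℕ, a < a' ∧ a' ≤ b' ∧ b' ≤ b ∧ KSat π a' b' ∧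
            a' ≤ z.val ∧ z.val ≤ b' := by
        intro z haz hzb hAz
        have hazlt : a < z.val := by
          rcases Nat.eq_or_lt_of_le haz with h | h
          · exfalso; apply hAz
            have : A = z := Fin.ext h
            rw [this]
          · exact h
        set P : ℕ → Prop := fun c => ∃ h : c < n, π A ⟨c, h⟩ with hP
        have hPa : P a := ⟨by omega, π.refl' A⟩
        set m := Nat.findGreatest P b with hm
        have hPm : P m := Nat.findGreatest_spec (le_of_lt (by omega : a < b)) hPa
        have ham : a ≤ m := Nat.le_findGreatest (by omega) hPa
        have hmb : m ≤ b := Nat.findGreatest_le b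
        obtain ⟨hmn, hπm⟩ := hPm
        have hzm : z.val ≠ m := by
          intro h
          apply hAz
          have : (⟨m, hmn⟩ : Fin n) = z := Fin.ext h.symm
          rw [← this]; exact hπm
        -- class membership transfers
        have memC : ∀ u : Fin n, π A u → u.val ≤ b → u.val ≤ m := by
          intro u hu hub
          exact Nat.le_findGreatest hub ⟨u.isLt, by rwa [Fin.eta]⟩
        rcases Nat.lt_or_ge z.val m with hlt | hge
        · -- gap case
          set c1 := Nat.findGreatest P z.val with hc1def
          have hc1z : c1 ≤ z.val := Nat.findGreatest_le z.val
          have hPc1 : P c1 := Nat.findGreatest_spec haz hPa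
          have hac1 : a ≤ c1 := Nat.le_findGreatest haz hPa
          obtain ⟨hc1n, hπc1⟩ := hPc1
          have hc1zlt : c1 < z.val := by
            rcases Nat.eq_or_lt_of_le hc1z with h | h
            · exfalso; apply hAz
              have : (⟨c1, hc1n⟩ : Fin n) = z := Fin.ext h
              rw [← this]; exact hπc1
            · exact h
          have hQ : ∃ c, z.val < c ∧ P c := ⟨m, hlt, ⟨hmn, hπm⟩⟩
          set c2 := Nat.find hQ with hc2def
          obtain ⟨hzc2, hc2n, hπc2⟩ := Nat.find_spec hQ
          have hc2m : c2 ≤ m := Nat.find_min' hQ ⟨hlt, ⟨hmn, hπm⟩⟩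
          have hgap : ∀ c, c1 < c → c < c2 → ¬ P c := by
            intro c h1 h2 hc
            rcases Nat.lt_or_ge z.val c with h | h
            · exact Nat.find_min hQ h2 ⟨h, hc⟩
            · exact Nat.findGreatest_is_greatest h1 h hc
          have hc1c2 : π (⟨c1, hc1n⟩ : Fin n) ⟨c2, hc2n⟩ := π.trans' (π.symm' hπc1) hπc2
          refine ⟨c1 + 1, c2 - 1, by omega, by omega, by omega, ?_, by omega, by omega⟩
          have key : ∀ u v : Fin n, π u v → (c1 + 1 ≤ u.val ∧ u.val ≤ c2 - 1) →
              (c1 + 1 ≤ v.val ∧ v.val ≤ c2 - 1) := by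
            intro u v huv hu
            have hvab : a ≤ v.val ∧ v.val ≤ b :=
              (hsat u v huv).mp ⟨by omega, by omega⟩
            have huC : ¬ π A u := by
              intro h
              exact hgap u.val (by omega) (by omega) ⟨u.isLt, by rwa [Fin.eta]⟩
            have hvC : ¬ π A v := fun h => huC (π.trans' h (π.symm' huv))
            by_contra hvout
            rcases Nat.lt_or_ge v.val (c1 + 1) with hv1 | hv1
            · rcases Nat.eq_or_lt_of_le (by omega : v.val ≤ c1) with heq | hlt'
              · apply hvC
                have : (⟨c1, hc1n⟩ : Fin n) = v := Fin.ext heq.symm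
                rw [← this]; exact hπc1
              · have hnc := NC v ⟨c1, hc1n⟩ u ⟨c2, hc2n⟩
                  (by simp only [Fin.lt_def]; omega) (by simp only [Fin.lt_def]; omega)
                  (by simp only [Fin.lt_def]; omega) (π.symm' huv) hc1c2
                exact hvC (π.trans' hπc1 (π.symm' hnc))
            · have hv2 : c2 ≤ v.val := by omega
              rcases Nat.eq_or_lt_of_le hv2 with heq | hlt'
              · apply hvC
                have : (⟨c2, hc2n⟩ : Fin n) = v := Fin.ext heq
                rw [← this]; exact hπc2
              · have hnc := NC ⟨c1, hc1n⟩ u ⟨c2, hc2n⟩ v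
                  (by simp only [Fin.lt_def]; omega) (by simp only [Fin.lt_def]; omega)
                  (by simp only [Fin.lt_def]; omega) hc1c2 huv
                exact huC (π.trans' hπc1 hnc)
          exact fun u v huv => ⟨key u v huv, key v u (π.symm' huv)⟩
        · -- tail case: z > m
          have hgt : m < z.val := by omega
          refine ⟨m + 1, b, by omega, by omega, le_refl b, ?_, by omega, hzb⟩
          have key : ∀ u v : Fin n, π u v → (m + 1 ≤ u.val ∧ u.val ≤ b) →
              (m + 1 ≤ v.val ∧ v.val ≤ b) := by
            intro u v huv hu
            have hvab : a ≤ v.val ∧ v.val ≤ b :=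
              (hsat u v huv).mp ⟨by omega, hu.2⟩
            have huC : ¬ π A u := by
              intro h
              have := memC u h hu.2
              omega
            by_contra hvout
            have hvm : v.val ≤ m := by omega
            have hvC : ¬ π A v := fun h => huC (π.trans' h (π.symm' huv))
            have hav : a < v.val := by
              rcases Nat.eq_or_lt_of_le hvab.1 with h | h
              · exfalso; apply hvC
                have : A = v := Fin.ext h
                rw [this]
              · exact h
            have hvmlt : v.val < m := by
              rcases Nat.eq_or_lt_of_le hvm with h | h
              · exfalso; apply hvC
                have : (⟨m, hmn⟩ : Fin n) = v := Fin.ext h.symm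
                rw [← this]; exact hπm
              · exact h
            have hnc := NC A v ⟨m, hmn⟩ u
              (by simp only [Fin.lt_def]; omega) (by simp only [Fin.lt_def]; omega)
              (by simp only [Fin.lt_def]; omega) hπm (π.symm' huv)
            exact hvC hnc
          exact fun u v huv => ⟨key u v huv, key v u (π.symm' huv)⟩
      by_cases hCx : π A x
      · by_cases hCy : π A y
        · exact π.trans' (π.symm' hCx) hCy
        · obtain ⟨a', b', haa', hab', hb'b, hsat', hz1, hz2⟩ := step y (by omega) hyb hCy
          have hx' := (NS a' b' hab' (by omega) hsat').mpr ⟨hz1, hz2⟩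
          exact ih a' b' hx'.1 hz2 (by omega) hsat' (by omega)
      · obtain ⟨a', b', haa', hab', hb'b, hsat', hz1, hz2⟩ := step x hax (by omega) hCx
        have hy' := (NS a' b' hab' (by omega) hsat').mp ⟨hz1, hz2⟩
        exact ih a' b' hz1 hy'.2 (by omega) hsat' (by omega)
  exact G n 0 (n - 1) (by omega) (by omega) (by omega)
    (fun u v _ => by have := u.isLt; have := v.isLt; omega) (by omega)

lemma alt_swap {n} {i k j l : Fin n} (h : KAlt i k j l) : KAlt k i j l := by
  simp only [KAlt, KSep, posU, posP] at h ⊢; omega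

lemma star {n} {π : Setoid (Fin n)} (NC : Noncross π) (x y : Fin n)
    (H : ∀ j l : Fin n, Kc π j l → ¬ KAlt x y j l) : π x y := by
  rcases lt_trichotomy x.val y.val with h | h | h
  · exact star_lt NC x y h H
  · have : x = y := Fin.ext h
    rw [this]
  · exact π.symm' (star_lt NC y x h (fun j l hjl ha => H j l hjl (alt_swap ha)))

def shiftS {n : ℕ} (π : Setoid (Fin n)) : Setoid (Fin n) where
  r a b := π (pr a) (pr b)
  iseqv := ⟨fun a => π.refl' _, fun h => π.symm' h, fun h1 h2 => π.trans' h1 h2⟩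

lemma shiftS_r {n} (π : Setoid (Fin n)) (a b : Fin n) :
    shiftS π a b ↔ π (pr a) (pr b) := Iff.rfl

lemma kc_kc {n} {π : Setoid (Fin n)} (NC : Noncross π) : Kc (Kc π) = shiftS π := by
  apply Setoid.ext
  intro j l
  rw [kc_r, shiftS_r]
  constructor
  · intro h
    apply star NC
    intro a b hab
    rw [← alt_rot]
    exact h a b hab
  · intro h a b hab halt
    exact (kc_r π a b).mp hab (pr j) (pr l) h ((alt_rot a b j l).mp halt)

lemma pr_iter {n : ℕ} (m : ℕ) (hm : m ≤ n) (j : Fin n) :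
    pr^[m] j = ⟨if j.val < m then j.val + n - m else j.val - m, by have := j.isLt; split <;> omega⟩ := by
  induction m with
  | zero => simp [Fin.ext_iff]
  | succ m ih =>
    rw [Function.iterate_succ_apply', ih (by omega)]
    have := j.isLt
    simp only [pr, Fin.ext_iff]
    split_ifs <;> omega

lemma shiftS_iter {n} (k : ℕ) (π : Setoid (Fin n)) (a b : Fin n) :
    (shiftS^[k] π) a b ↔ π (pr^[k] a) (pr^[k] b) := by
  induction k generalizing a b with
  | zero => exact Iff.rfl
  | succ k ih =>
    rw [Function.iterate_succ_apply', Function.iterate_succ_apply,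
      Function.iterate_succ_apply, shiftS_r, ih]

lemma shiftS_iter_n {n} (π : Setoid (Fin n)) : shiftS^[n] π = π := by
  apply Setoid.ext
  intro a b
  rw [shiftS_iter, pr_iter n le_rfl a, pr_iter n le_rfl b]
  have ha := a.isLt; have hb := b.isLt
  have h1 : (⟨if a.val < n then a.val + n - n else a.val - n, by split <;> omega⟩ : Fin n) = a := by
    apply Fin.ext; simp only; split_ifs <;> omega
  have h2 : (⟨if b.val < n then b.val + n - n else b.val - n, by split <;> omega⟩ : Fin n) = b := by
    apply Fin.ext; simp only; split_ifs <;> omega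
  rw [h1, h2]

/-- The Kreweras complement `ρ` on non-crossing partitions of `[n]` satisfies `ρ^(2n) = id`. -/
theorem krewerasCompl_pow_two_n_eq_id (n : ℕ) (ρ : Setoid (Fin n) → Setoid (Fin n))
    (hρ : ∀ π, Noncross π → IsKrewerasCompl π (ρ π)) :
    ∀ π, Noncross π → ρ^[2 * n] π = π := by
  have key : ∀ k : ℕ, ∀ π, Noncross π → ρ^[2 * k] π = shiftS^[k] π := by
    intro k
    induction k with
    | zero => intro π _; rfl
    | succ k ih =>
      intro π hπ
      have h1 : ρ π = Kc π := kc_unique (hρ π hπ)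
      have h2 : Noncross (Kc π) := noncross_kc π
      have h3 : ρ (Kc π) = Kc (Kc π) := kc_unique (hρ _ h2)
      have h4 : Kc (Kc π) = shiftS π := kc_kc hπ
      have h5 : Noncross (shiftS π) := h4 ▸ noncross_kc (Kc π)
      have e2 : ρ (ρ π) = shiftS π := by rw [h1, h3, h4]
      have : 2 * (k + 1) = 2 * k + 1 + 1 := by ring
      rw [this, Function.iterate_succ_apply, Function.iterate_succ_apply, e2,
        ih (shiftS π) h5, ← Function.iterate_succ_apply]
  intro π hπ
  rw [key n π hπ, shiftS_iter_n]
end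

section
/- The Kreweras complement reverses cover relations: if π is covered by ν in the lattice of non-crossing partitions of [n], then ρ(ν) is covered by ρ(π). -/
/-- `ν` covers `π` in the lattice of non-crossing partitions of `[n]`: `ν` is obtained
from `π` by merging exactly two blocks into one (so `π ≤ ν` in refinement order and `ν` has
one block fewer). -/
def NCCovBy {n : ℕ} (π ν : Setoid (Fin n)) : Prop :=
  Noncross π ∧ Noncross ν ∧ π ≤ ν ∧ π ≠ ν ∧
    Nat.card (Quotient ν) + 1 = Nat.card (Quotient π)

section Counting
variable {α : Type*} [Finite α]

def qmap {s t : Setoid α} (h : s ≤ t) : Quotient s → Quotient t :=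
  fun x => Quotient.liftOn x (fun a => Quotient.mk t a) (fun a b hab => Quot.sound (h hab))

lemma qmap_surj {s t : Setoid α} (h : s ≤ t) : Function.Surjective (qmap h) := by
  rintro ⟨a⟩; exact ⟨Quotient.mk s a, rfl⟩

lemma card_quot_le {s t : Setoid α} (h : s ≤ t) :
    Nat.card (Quotient t) ≤ Nat.card (Quotient s) :=
  Nat.card_le_card_of_surjective _ (qmap_surj h)

lemma setoid_eq_of_card {s t : Setoid α} (h : s ≤ t)
    (hc : Nat.card (Quotient s) ≤ Nat.card (Quotient t)) : s = t := by
  have hb : Function.Bijective (qmap h) := (qmap_surj h).bijective_of_nat_card_le hc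
  refine le_antisymm h (Setoid.le_def.mpr ?_)
  intro a b hab
  have : qmap h (Quotient.mk s a) = qmap h (Quotient.mk s b) := Quot.sound hab
  exact Quotient.exact (hb.1 this)

lemma card_quot_lt {s t : Setoid α} (h : s ≤ t) (hne : s ≠ t) :
    Nat.card (Quotient t) < Nat.card (Quotient s) := by
  rcases lt_or_eq_of_le (card_quot_le h) with h' | h'
  · exact h'
  · exact absurd (setoid_eq_of_card h h'.ge) hne

end Counting

lemma card_quot_bot (n : ℕ) : Nat.card (Quotient (⊥ : Setoid (Fin n))) = n := by
  have : Function.Bijective (Quotient.mk (⊥ : Setoid (Fin n))) := by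
    constructor
    · intro a b hab
      have h2 : (⊥ : Setoid (Fin n)) a b := Quotient.exact hab
      rwa [Setoid.bot_def] at h2
    · rintro ⟨a⟩; exact ⟨a, rfl⟩
  rw [← (Nat.card_eq_of_bijective _ this), Nat.card_eq_fintype_card, Fintype.card_fin]

lemma card_quot_top (n : ℕ) (hn : 1 ≤ n) : Nat.card (Quotient (⊤ : Setoid (Fin n))) = 1 := by
  rw [Nat.card_eq_one_iff_unique]
  constructor
  · constructor
    rintro ⟨a⟩ ⟨b⟩
    exact Quot.sound (by rw [Setoid.top_def]; trivial)
  · exact ⟨Quotient.mk _ ⟨0, hn⟩⟩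

section SplitMerge
variable {n : ℕ}

lemma setoid_ne_bot {π : Setoid (Fin n)} (h : π ≠ ⊥) : ∃ x y : Fin n, π x y ∧ x ≠ y := by
  by_contra hc
  push_neg at hc
  apply h
  refine le_antisymm ?_ bot_le
  intro a b hab
  have : a = b := hc a b hab
  rw [show ((⊥ : Setoid (Fin n)) a b) = (a = b) from by rw [Setoid.bot_def]]
  exact this

lemma setoid_ne_top {π : Setoid (Fin n)} (h : π ≠ ⊤) : ∃ x y : Fin n, ¬ π x y := by
  by_contra hc
  push_neg at hc
  apply h
  refine le_antisymm le_top ?_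
  intro a b _
  exact hc a b

lemma exists_split {π : Setoid (Fin n)} (hπ : Noncross π) (hne : π ≠ ⊥) :
    ∃ π' : Setoid (Fin n), Noncross π' ∧ π' ≤ π ∧ π' ≠ π ∧
      Nat.card (Quotient π') = Nat.card (Quotient π) + 1 := by
  classical
  obtain ⟨x, y, hxy, hxyne⟩ := setoid_ne_bot hne
  refine ⟨⟨fun a b => π a b ∧ (a = x ↔ b = x),
     ⟨fun a => ⟨π.refl' a, Iff.rfl⟩,
      fun h => ⟨π.symm' h.1, h.2.symm⟩,
      fun h1 h2 => ⟨π.trans' h1.1 h2.1, h1.2.trans h2.2⟩⟩⟩, ?_, ?_, ?_, ?_⟩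
  · intro i j k l hij hjk hkl hik hjl
    obtain ⟨hik, hikx⟩ := hik
    obtain ⟨hjl, hjlx⟩ := hjl
    refine ⟨hπ i j k l hij hjk hkl hik hjl, ?_⟩
    have hix : i ≠ x := fun hh => absurd (hh.trans (hikx.mp hh).symm) (ne_of_lt (hij.trans hjk))
    have hjx : j ≠ x := fun hh => absurd (hh.trans (hjlx.mp hh).symm) (ne_of_lt (hjk.trans hkl))
    exact iff_of_false hix hjx
  · intro a b hab; exact hab.1
  · intro he
    have h2 := hxy
    rw [← he] at h2
    have h3 : π x y ∧ (x = x ↔ y = x) := h2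
    exact hxyne (h3.2.mp rfl).symm
  · set π' : Setoid (Fin n) := ⟨fun a b => π a b ∧ (a = x ↔ b = x), _⟩
    have wd : ∀ a b : Fin n, π' a b →
        (if a = x then (Sum.inr () : Quotient π ⊕ Unit) else Sum.inl (Quotient.mk π a))
        = (if b = x then Sum.inr () else Sum.inl (Quotient.mk π b)) := by
      rintro a b ⟨hab, hx⟩
      by_cases ha : a = x
      · rw [if_pos ha, if_pos (hx.mp ha)]
      · rw [if_neg ha, if_neg (fun hb => ha (hx.mpr hb))]
        exact congrArg _ (Quot.sound hab)
    let f : Quotient π' → Quotient π ⊕ Unit := Quotient.lift _ wd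
    have hbij : Function.Bijective f := by
      constructor
      · rintro ⟨a⟩ ⟨b⟩ hab
        change (if a = x then _ else _) = (if b = x then _ else _) at hab
        apply Quot.sound
        by_cases ha : a = x <;> by_cases hb : b = x
        · have hab' : a = b := ha.trans hb.symm
          subst hab'; exact ⟨π.refl' a, Iff.rfl⟩
        · rw [if_pos ha, if_neg hb] at hab; exact absurd hab (by simp)
        · rw [if_neg ha, if_pos hb] at hab; exact absurd hab (by simp)
        · rw [if_neg ha, if_neg hb] at hab
          have := Quotient.exact (Sum.inl.inj hab)
          exact ⟨this, by simp [ha, hb]⟩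
      · rintro (q | u)
        · obtain ⟨a⟩ := q
          by_cases ha : a = x
          · refine ⟨Quotient.mk π' y, ?_⟩
            have hy : ¬ y = x := fun h => hxyne h.symm
            change (if y = x then _ else _) = _
            rw [if_neg hy]
            exact congrArg _ (Quot.sound (ha ▸ π.symm' hxy))
          · exact ⟨Quotient.mk π' a, by change (if a = x then _ else _) = _; rw [if_neg ha]; rfl⟩
        · exact ⟨Quotient.mk π' x, by change (if x = x then _ else _) = _; simp⟩
    have := Nat.card_eq_of_bijective f hbij
    rw [this, Nat.card_sum]
    simp
end SplitMerge

lemma exists_merge {n : ℕ} (hn : 1 ≤ n) {ν : Setoid (Fin n)} (hν : Noncross ν) (hne : ν ≠ ⊤) :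
    ∃ M : Setoid (Fin n), Noncross M ∧ ν ≤ M ∧ ν ≠ M ∧
      Nat.card (Quotient ν) = Nat.card (Quotient M) + 1 := by
  classical
  set z : Fin n := ⟨0, hn⟩ with hz
  have hex : ∃ a : Fin n, ¬ ν z a := by
    obtain ⟨a, b, hab⟩ := setoid_ne_top hne
    by_cases h1 : ν z a
    · exact ⟨b, fun h2 => hab (ν.trans' (ν.symm' h1) h2)⟩
    · exact ⟨a, h1⟩
  set S : Finset (Fin n) := Finset.univ.filter (fun a => ¬ ν z a) with hS
  have hSne : S.Nonempty := by
    obtain ⟨a, ha⟩ := hex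
    exact ⟨a, by simp [hS, ha]⟩
  set m : Fin n := S.min' hSne with hm
  have hmem : ¬ ν z m := by
    have := S.min'_mem hSne
    simp [hS] at this; exact this
  have hmin : ∀ a : Fin n, ¬ ν z a → m ≤ a := by
    intro a ha
    exact S.min'_le a (by simp [hS, ha])
  have G1 : ∀ a : Fin n, a < m → ν z a := by
    intro a ha
    by_contra hc
    exact absurd (hmin a hc) (not_le.mpr ha)
  have G2 : ∀ x : Fin n, ν m x → m ≤ x := by
    intro x hx
    by_contra hc
    push_neg at hc
    exact hmem (ν.trans' (G1 x hc) (ν.symm' hx))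
  -- the merged relation
  set inM : Fin n → Prop := fun a => ν z a ∨ ν m a with hinM
  have hMz : inM z := Or.inl (ν.refl' z)
  have hMm : inM m := Or.inr (ν.refl' m)
  have inM_of_rel : ∀ a b : Fin n, ν a b → inM b → inM a := by
    rintro a b hab (h | h)
    · exact Or.inl (ν.trans' h (ν.symm' hab))
    · exact Or.inr (ν.trans' h (ν.symm' hab))
  have G3 : ∀ x : Fin n, ¬ inM x → m < x := by
    intro x hx
    have h1 : ¬ ν z x := fun h => hx (Or.inl h)
    have h2 : m ≤ x := hmin x h1
    rcases lt_or_eq_of_le h2 with h | h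
    · exact h
    · exact absurd (h ▸ hMm : inM x) hx
  set M : Setoid (Fin n) := ⟨fun a b => ν a b ∨ (inM a ∧ inM b),
    ⟨fun a => Or.inl (ν.refl' a),
     fun h => h.elim (fun h => Or.inl (ν.symm' h)) (fun h => Or.inr ⟨h.2, h.1⟩),
     fun {a b c} h1 h2 => by
       rcases h1 with h1 | h1 <;> rcases h2 with h2 | h2
       · exact Or.inl (ν.trans' h1 h2)
       · exact Or.inr ⟨inM_of_rel a b h1 h2.1, h2.2⟩
       · exact Or.inr ⟨h1.1, inM_of_rel c b (ν.symm' h2) h1.2⟩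
       · exact Or.inr ⟨h1.1, h2.2⟩⟩⟩ with hMdef
  have hMr : ∀ a b : Fin n, M a b ↔ (ν a b ∨ (inM a ∧ inM b)) := fun a b => Iff.rfl
  refine ⟨M, ?_, ?_, ?_, ?_⟩
  · -- Noncross M
    intro i j k l hij hjk hkl hik hjl
    rw [hMr] at hik hjl ⊢
    rcases hik with hik | ⟨hiM, hkM⟩
    · rcases hjl with hjl | ⟨hjM, hlM⟩
      · exact Or.inl (hν i j k l hij hjk hkl hik hjl)
      · by_cases hiM : inM i
        · exact Or.inr ⟨hiM, hjM⟩
        exfalso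
        have him : m < i := G3 i hiM
        rcases hjM with hj0 | hjm
        · have hzi : z < i := by
            have : (0:ℕ) < i.val := lt_of_le_of_lt (Nat.zero_le m.val) him
            exact Fin.lt_def.mpr this
          exact hiM (inM_of_rel i z (ν.symm' (hν z i j k hzi hij hjk hj0 hik)) hMz)
        · exact hiM (inM_of_rel i m (ν.symm' (hν m i j k him hij hjk hjm hik)) hMm)
    · rcases hjl with hjl | ⟨hjM, hlM⟩
      · by_cases hjM : inM j
        · exact Or.inr ⟨hiM, hjM⟩
        exfalso
        have hjm : m < j := G3 j hjM
        rcases hkM with hk0 | hkm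
        · have hzj : z < j := by
            have : (0:ℕ) < j.val := lt_of_le_of_lt (Nat.zero_le m.val) hjm
            exact Fin.lt_def.mpr this
          exact hjM (inM_of_rel j z (ν.symm' (hν z j k l hzj hjk hkl hk0 hjl)) hMz)
        · exact hjM (inM_of_rel j m (ν.symm' (hν m j k l hjm hjk hkl hkm hjl)) hMm)
      · exact Or.inr ⟨hiM, hjM⟩
  · intro a b hab; rw [hMr]; exact Or.inl hab
  · intro he
    have hMzm : M z m := (hMr z m).mpr (Or.inr ⟨hMz, hMm⟩)
    rw [← he] at hMzm
    exact hmem hMzm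
  · -- counting
    have wd : ∀ a b : Fin n, ν a b →
        (if ν m a then (Sum.inr () : Quotient M ⊕ Unit) else Sum.inl (Quotient.mk M a))
        = (if ν m b then Sum.inr () else Sum.inl (Quotient.mk M b)) := by
      intro a b hab
      by_cases ha : ν m a
      · rw [if_pos ha, if_pos (ν.trans' ha hab)]
      · rw [if_neg ha, if_neg (fun hb => ha (ν.trans' hb (ν.symm' hab)))]
        exact congrArg _ (Quot.sound ((hMr a b).mpr (Or.inl hab)))
    let f : Quotient ν → Quotient M ⊕ Unit := Quotient.lift _ wd
    have hbij : Function.Bijective f := by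
      constructor
      · rintro ⟨a⟩ ⟨b⟩ hab
        change (if ν m a then _ else _) = (if ν m b then _ else _) at hab
        apply Quot.sound
        by_cases ha : ν m a <;> by_cases hb : ν m b
        · exact ν.trans' (ν.symm' ha) hb
        · rw [if_pos ha, if_neg hb] at hab; exact absurd hab (by simp)
        · rw [if_neg ha, if_pos hb] at hab; exact absurd hab (by simp)
        · rw [if_neg ha, if_neg hb] at hab
          have h2 : M a b := Quotient.exact (Sum.inl.inj hab)
          rcases (hMr a b).mp h2 with h3 | ⟨h3, h4⟩
          · exact h3
          · have hza : ν z a := h3.resolve_right ha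
            have hzb : ν z b := h4.resolve_right hb
            exact ν.trans' (ν.symm' hza) hzb
      · rintro (q | u)
        · obtain ⟨a⟩ := q
          by_cases ha : ν m a
          · refine ⟨Quotient.mk ν z, ?_⟩
            have hz2 : ¬ ν m z := fun h => hmem (ν.symm' h)
            change (if ν m z then _ else _) = _
            rw [if_neg hz2]
            refine congrArg _ (Quot.sound ((hMr z a).mpr (Or.inr ⟨hMz, Or.inr ha⟩)))
          · exact ⟨Quotient.mk ν a, by change (if ν m a then _ else _) = _; rw [if_neg ha]; rfl⟩
        · refine ⟨Quotient.mk ν m, ?_⟩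
          change (if ν m m then _ else _) = _
          rw [if_pos (ν.refl' m)]
    have := Nat.card_eq_of_bijective f hbij
    rw [this, Nat.card_sum]
    simp

section Rho
variable {n : ℕ}

lemma noncross_bot : Noncross (⊥ : Setoid (Fin n)) := by
  intro i j k l h1 h2 h3 hik _
  have : i = k := by rwa [Setoid.bot_def] at hik
  exact absurd (this ▸ (h1.trans h2)) (lt_irrefl i)

lemma noncross_top : Noncross (⊤ : Setoid (Fin n)) := by
  intro i j k l _ _ _ _ _
  rw [Setoid.top_def]; trivial

lemma rho_antitone {ρ : Setoid (Fin n) → Setoid (Fin n)}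
    (hρ : ∀ π, Noncross π → IsKrewerasCompl π (ρ π))
    {π ν : Setoid (Fin n)} (hπ : Noncross π) (hν : Noncross ν) (hle : π ≤ ν) :
    ρ ν ≤ ρ π := by
  obtain ⟨h1, h2, _⟩ := hρ ν hν
  exact (hρ π hπ).2.2 (ρ ν) h1 (fun i k j l hik hjl => h2 i k j l (hle hik) hjl)

lemma rho_bot {ρ : Setoid (Fin n) → Setoid (Fin n)}
    (hρ : ∀ π, Noncross π → IsKrewerasCompl π (ρ π)) :
    ρ (⊥ : Setoid (Fin n)) = ⊤ := by
  refine le_antisymm le_top ?_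
  refine (hρ ⊥ noncross_bot).2.2 ⊤ noncross_top ?_
  intro i k j l hik _
  have hik' : i = k := by rwa [Setoid.bot_def] at hik
  subst hik'
  constructor
  · rintro ⟨A, B, _⟩; exact absurd (A.trans B) (lt_irrefl _)
  · rintro ⟨_, B, C⟩; exact absurd (B.trans C) (lt_irrefl _)

lemma rho_top {ρ : Setoid (Fin n) → Setoid (Fin n)}
    (hρ : ∀ π, Noncross π → IsKrewerasCompl π (ρ π)) :
    ρ (⊤ : Setoid (Fin n)) = ⊥ := by
  refine le_antisymm ?_ bot_le
  intro j l hjl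
  rw [Setoid.bot_def]
  by_contra hne
  have htop : ∀ a b : Fin n, (⊤ : Setoid (Fin n)) a b := by
    intro a b; rw [Setoid.top_def]; trivial
  have key : ∀ a b : Fin n, a < b → (ρ ⊤) a b → False := by
    intro a b hab hr
    refine ((hρ ⊤ noncross_top).2.1 a b a b (htop a b) hr).2 ?_
    refine ⟨?_, ?_, ?_⟩ <;> (unfold posU posP; have := Fin.lt_def.mp hab; omega)
  rcases lt_or_gt_of_ne hne with h | h
  · exact key j l h hjl
  · exact key l j h ((ρ ⊤).symm' hjl)

/-- For a noncrossing partition, the interval spanned by a block is closed under the relation. -/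
lemma block_interval_closed {τ : Setoid (Fin n)} (hτ : Noncross τ) (x p q : Fin n)
    (hp : τ x p) (hq : τ x q)
    (hmin : ∀ y, τ x y → p ≤ y) (hmax : ∀ y, τ x y → y ≤ q) :
    ∀ a c, τ a c → p ≤ a → a ≤ q → p ≤ c ∧ c ≤ q := by
  intro a c hac hpa haq
  have hpq : τ p q := τ.trans' (τ.symm' hp) hq
  constructor
  · by_contra hcp
    push_neg at hcp
    by_cases hxa : τ x a
    · exact absurd (hmin c (τ.trans' hxa hac)) (not_le.mpr hcp)
    · have hpa' : p < a := lt_of_le_of_ne hpa (fun h => hxa (h ▸ hp))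
      have haq' : a < q := lt_of_le_of_ne haq (fun h : a = q => hxa (h.symm ▸ hq))
      have hcpl := hτ c p a q hcp hpa' haq' (τ.symm' hac) hpq
      exact absurd (hmin c (τ.trans' hp (τ.symm' hcpl))) (not_le.mpr hcp)
  · by_contra hqc
    push_neg at hqc
    by_cases hxa : τ x a
    · exact absurd (hmax c (τ.trans' hxa hac)) (not_le.mpr hqc)
    · have hpa' : p < a := lt_of_le_of_ne hpa (fun h => hxa (h ▸ hp))
      have haq' : a < q := lt_of_le_of_ne haq (fun h : a = q => hxa (h.symm ▸ hq))
      have hpal := hτ p a q c hpa' haq' hqc hpq hac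
      exact hxa (τ.trans' hp hpal)

lemma block_bounds {π : Setoid (Fin n)} (hπ : Noncross π) (x : Fin n) :
    ∃ p q : Fin n, π x p ∧ π x q ∧ p ≤ x ∧ x ≤ q ∧
      (∀ a c : Fin n, π a c → p.val ≤ a.val → a.val ≤ q.val →
        p.val ≤ c.val ∧ c.val ≤ q.val) := by
  classical
  set B : Finset (Fin n) := Finset.univ.filter (fun a => π x a) with hB
  have hxB : x ∈ B := by simp [hB, π.refl' x]
  have hBne : B.Nonempty := ⟨x, hxB⟩
  set p := B.min' hBne with hpdef
  set q := B.max' hBne with hqdef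
  have hp : π x p := by have := B.min'_mem hBne; simpa [hB] using this
  have hq : π x q := by have := B.max'_mem hBne; simpa [hB] using this
  have hmin : ∀ y, π x y → p ≤ y := fun y hy => B.min'_le y (by simp [hB, hy])
  have hmax : ∀ y, π x y → y ≤ q := fun y hy => B.le_max' y (by simp [hB, hy])
  have hcl := block_interval_closed hπ x p q hp hq hmin hmax
  refine ⟨p, q, hp, hq, hmin x (π.refl' x), hmax x (π.refl' x), ?_⟩
  intro a c hac ha1 ha2
  have := hcl a c hac (Fin.le_def.mpr ha1) (Fin.le_def.mpr ha2)
  exact ⟨Fin.le_def.mp this.1, Fin.le_def.mp this.2⟩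

/-- If `[j, l-1]` is closed under `π` but some `ν`-chord leaves it, then adding the
primed chord `(j', l')` contradicts the maximality of the Kreweras complement. -/
lemma chord_crossing_contra {π ν σ : Setoid (Fin n)}
    (hπσ : IsKrewerasCompl π σ) (hνσ : NoMixedCross ν σ)
    (j l : Fin n) (hjl : j < l)
    (hclosed : ∀ a c : Fin n, π a c → (j.val ≤ a.val ∧ a.val < l.val) →
      (j.val ≤ c.val ∧ c.val < l.val))
    (x y : Fin n) (hxy : ν x y) (hx : j.val ≤ x.val ∧ x.val < l.val)
    (hy : ¬(j.val ≤ y.val ∧ y.val < l.val)) : False := by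
  classical
  have hjl' : j.val < l.val := Fin.lt_def.mp hjl
  set σ' : Setoid (Fin n) := ⟨fun a b => a = b ∨ ((a = j ∧ b = l) ∨ (a = l ∧ b = j)),
    ⟨fun a => Or.inl rfl,
     fun h => h.elim (fun h => Or.inl h.symm)
       (fun h => h.elim (fun h => Or.inr (Or.inr ⟨h.2, h.1⟩)) (fun h => Or.inr (Or.inl ⟨h.2, h.1⟩))),
     fun {a b c} h1 h2 => by
       rcases h1 with h1 | (⟨ha, hb⟩ | ⟨ha, hb⟩) <;>
         rcases h2 with h2 | (⟨hb', hc⟩ | ⟨hb', hc⟩) <;>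
         subst_vars <;> simp_all⟩⟩ with hσ'def
  have hσ'r : ∀ a b : Fin n, σ' a b ↔ (a = b ∨ ((a = j ∧ b = l) ∨ (a = l ∧ b = j))) :=
    fun a b => Iff.rfl
  have hnc : Noncross σ' := by
    intro i₀ j₀ k₀ l₀ h1 h2 h3 hik hjl2
    rw [hσ'r] at hik hjl2 ⊢
    have e1 := Fin.lt_def.mp h1
    have e2 := Fin.lt_def.mp h2
    have e3 := Fin.lt_def.mp h3
    rcases hik with h | (⟨ha, hb⟩ | ⟨ha, hb⟩) <;>
      rcases hjl2 with h' | (⟨ha', hb'⟩ | ⟨ha', hb'⟩) <;>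
      first
        | (left; rfl)
        | (exfalso; subst_vars; omega)
        | skip
    all_goals (exfalso; subst_vars; omega)
  have hnomix : NoMixedCross π σ' := by
    intro a c jj ll hac hσ2
    rw [hσ'r] at hσ2
    rcases hσ2 with h | (⟨hj2, hl2⟩ | ⟨hj2, hl2⟩)
    · subst h
      constructor <;> rintro ⟨A, B, C⟩ <;> (unfold posU posP at A B C; omega)
    · have ej : jj.val = j.val := by rw [hj2]
      have el : ll.val = l.val := by rw [hl2]
      constructor
      · rintro ⟨A, B, C⟩
        unfold posU posP at A B C
        have hc' : j.val ≤ c.val ∧ c.val < l.val := by omega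
        have := hclosed c a (π.symm' hac) hc'
        omega
      · rintro ⟨A, B, C⟩
        unfold posU posP at A B C
        have ha' : j.val ≤ a.val ∧ a.val < l.val := by omega
        have := hclosed a c hac ha'
        omega
    · have ej : jj.val = l.val := by rw [hj2]
      have el : ll.val = j.val := by rw [hl2]
      constructor <;> rintro ⟨A, B, C⟩ <;> (unfold posU posP at A B C; omega)
  have hle' : σ' ≤ σ := hπσ.2.2 σ' hnc hnomix
  have hσjl : σ j l := hle' ((hσ'r j l).mpr (Or.inr (Or.inl ⟨rfl, rfl⟩)))
  rcases not_and_or.mp hy with h | h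
  · -- y < j : pattern 1 with chord (y, x)
    push_neg at h
    refine ((hνσ y x j l (ν.symm' hxy) hσjl).1 ?_)
    refine ⟨?_, ?_, ?_⟩ <;> (unfold posU posP; omega)
  · -- l ≤ y : pattern 2 with chord (x, y)
    push_neg at h
    refine ((hνσ x y j l hxy hσjl).2 ?_)
    refine ⟨?_, ?_, ?_⟩ <;> (unfold posU posP; omega)

lemma interval_contra {π ν σ : Setoid (Fin n)}
    (hπσ : IsKrewerasCompl π σ) (hνσ : NoMixedCross ν σ)
    (p q : Fin n)
    (hclosed : ∀ a c : Fin n, π a c → p.val ≤ a.val → a.val ≤ q.val →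
      p.val ≤ c.val ∧ c.val ≤ q.val)
    (x y : Fin n) (hxy : ν x y) (hx : p.val ≤ x.val ∧ x.val ≤ q.val)
    (hy : ¬(p.val ≤ y.val ∧ y.val ≤ q.val)) : False := by
  by_cases hq : q.val + 1 < n
  · refine chord_crossing_contra hπσ hνσ p ⟨q.val + 1, hq⟩
      (Fin.lt_def.mpr (by simp; omega)) ?_ x y hxy (by simp; omega) (by simp; omega)
    intro a c hac ha
    have := hclosed a c hac ha.1 (by simpa using Nat.lt_succ_iff.mp ha.2)
    simp; omega
  · have hqn : q.val + 1 = n := by have := q.isLt; omega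
    have hyq : y.val ≤ q.val := by have := y.isLt; omega
    have hyp : y.val < p.val := by
      rcases Nat.lt_or_ge y.val p.val with h | h
      · exact h
      · exact absurd ⟨h, hyq⟩ hy
    have hn0 : 0 < n := by omega
    refine chord_crossing_contra hπσ hνσ ⟨0, hn0⟩ p
      (Fin.lt_def.mpr (by simp; omega)) ?_ y x (ν.symm' hxy) (by simp; omega) (by simp; omega)
    intro a c hac ha
    simp at ha
    constructor
    · simp
    · simp
      by_contra hcp
      push_neg at hcp
      have hcq : c.val ≤ q.val := by have := c.isLt; omega
      have := hclosed c a (π.symm' hac) hcp hcq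
      omega

end Rho

section Main
variable {n : ℕ}

lemma rho_strict {ρ : Setoid (Fin n) → Setoid (Fin n)}
    (hρ : ∀ π, Noncross π → IsKrewerasCompl π (ρ π))
    {π ν : Setoid (Fin n)} (hπ : Noncross π) (hν : Noncross ν)
    (hle : π ≤ ν) (hne : π ≠ ν) : ρ ν ≠ ρ π := by
  classical
  intro heq
  obtain ⟨i, k, hik_lt, hik_ν, hik_nπ⟩ : ∃ i k : Fin n, i < k ∧ ν i k ∧ ¬ π i k := by
    have hnle : ¬ (ν ≤ π) := fun hh => hne (le_antisymm hle hh)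
    rw [Setoid.le_def] at hnle; push_neg at hnle
    obtain ⟨a, b, hab, hnab⟩ := hnle
    have hne' : a ≠ b := fun hh => hnab (hh ▸ π.refl' a)
    rcases lt_or_gt_of_ne hne' with hh | hh
    · exact ⟨a, b, hh, hab, hnab⟩
    · exact ⟨b, a, hh, ν.symm' hab, fun hc => hnab (π.symm' hc)⟩
  have hπK := hρ π hπ
  have hνσ : NoMixedCross ν (ρ π) := heq ▸ (hρ ν hν).2.1
  obtain ⟨p₁, p₂, hip1, hip2, hp1i, hip2', hclP⟩ := block_bounds hπ i
  obtain ⟨q₁, q₂, hkq1, hkq2, hq1k, hkq2', hclQ⟩ := block_bounds hπ k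
  by_cases hP : ∀ a c : Fin n, ν a c → p₁.val ≤ a.val → a.val ≤ p₂.val →
      p₁.val ≤ c.val ∧ c.val ≤ p₂.val
  · by_cases hQ : ∀ a c : Fin n, ν a c → q₁.val ≤ a.val → a.val ≤ q₂.val →
        q₁.val ≤ c.val ∧ c.val ≤ q₂.val
    · -- both block intervals ν-closed : contradiction inside π
      have hkP : p₁.val ≤ k.val ∧ k.val ≤ p₂.val :=
        hP i k hik_ν (Fin.le_def.mp hp1i) (Fin.le_def.mp hip2')
      have hkp2 : k.val < p₂.val := by
        rcases Nat.lt_or_ge k.val p₂.val with hh | hh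
        · exact hh
        · have : k = p₂ := Fin.ext (le_antisymm hkP.2 hh)
          exact absurd (this ▸ hip2) hik_nπ
      have hiQ : q₁.val ≤ i.val ∧ i.val ≤ q₂.val :=
        hQ k i (ν.symm' hik_ν) (Fin.le_def.mp hq1k) (Fin.le_def.mp hkq2')
      have hq1i : q₁.val < i.val := by
        rcases Nat.lt_or_ge q₁.val i.val with hh | hh
        · exact hh
        · have : q₁ = i := Fin.ext (le_antisymm hiQ.1 hh)
          exact absurd (π.symm' (this ▸ hkq1)) hik_nπ
      have hcross := hπ q₁ i k p₂ (Fin.lt_def.mpr hq1i) hik_lt (Fin.lt_def.mpr hkp2)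
        (π.symm' hkq1) hip2
      exact hik_nπ (π.trans' (π.symm' hcross) (π.symm' hkq1))
    · push_neg at hQ
      obtain ⟨a, c, hac, h1, h2, h3⟩ := hQ
      exact interval_contra hπK hνσ q₁ q₂ hclQ a c hac ⟨h1, h2⟩
        (fun hh => by have := h3 hh.1; omega)
  · push_neg at hP
    obtain ⟨a, c, hac, h1, h2, h3⟩ := hP
    exact interval_contra hπK hνσ p₁ p₂ hclP a c hac ⟨h1, h2⟩
      (fun hh => by have := h3 hh.1; omega)

lemma card_quot_le_n (π : Setoid (Fin n)) : Nat.card (Quotient π) ≤ n := by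
  have hs : Function.Surjective (Quotient.mk π) := by rintro ⟨a⟩; exact ⟨a, rfl⟩
  have := Nat.card_le_card_of_surjective _ hs
  simpa using this

lemma card_quot_pos (hn : 1 ≤ n) (π : Setoid (Fin n)) : 1 ≤ Nat.card (Quotient π) := by
  have : Nonempty (Quotient π) := ⟨Quotient.mk π ⟨0, hn⟩⟩
  exact Nat.card_pos

lemma kreweras_sum (hn : 1 ≤ n) {ρ : Setoid (Fin n) → Setoid (Fin n)}
    (hρ : ∀ π, Noncross π → IsKrewerasCompl π (ρ π)) :
    ∀ π, Noncross π →
      Nat.card (Quotient π) + Nat.card (Quotient (ρ π)) = n + 1 := by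
  have hbot : Nat.card (Quotient (⊥ : Setoid (Fin n))) = n := card_quot_bot n
  have htop : Nat.card (Quotient (⊤ : Setoid (Fin n))) = 1 := card_quot_top n hn
  have LB : ∀ m : ℕ, ∀ π : Setoid (Fin n), Noncross π →
      n - Nat.card (Quotient π) ≤ m →
      n + 1 ≤ Nat.card (Quotient π) + Nat.card (Quotient (ρ π)) := by
    intro m
    induction m with
    | zero =>
      intro π hπ hm
      have h1 := card_quot_le_n π
      have h2 : Nat.card (Quotient π) = n := by omega
      have h3 : π = ⊥ := (setoid_eq_of_card bot_le (by rw [hbot, h2])).symm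
      rw [h3, rho_bot hρ, hbot, htop]
    | succ m ih =>
      intro π hπ hm
      by_cases hb : π = ⊥
      · rw [hb, rho_bot hρ, hbot, htop]
      · obtain ⟨π', hπ', hle', hne', hcard'⟩ := exists_split hπ hb
        have h1 := card_quot_le_n π'
        have h2 := ih π' hπ' (by omega)
        have h3 : ρ π ≤ ρ π' := rho_antitone hρ hπ' hπ hle'
        have h4 : ρ π ≠ ρ π' := rho_strict hρ hπ' hπ hle' hne'
        have h5 := card_quot_lt h3 h4
        omega
  have UB : ∀ m : ℕ, ∀ π : Setoid (Fin n), Noncross π →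
      Nat.card (Quotient π) ≤ m →
      Nat.card (Quotient π) + Nat.card (Quotient (ρ π)) ≤ n + 1 := by
    intro m
    induction m with
    | zero =>
      intro π hπ hm
      exact absurd (card_quot_pos hn π) (by omega)
    | succ m ih =>
      intro π hπ hm
      by_cases ht : π = ⊤
      · rw [ht, rho_top hρ, hbot, htop]; omega
      · obtain ⟨M, hM, hle', hne', hcard'⟩ := exists_merge hn hπ ht
        have h2 := ih M hM (by omega)
        have h3 : ρ M ≤ ρ π := rho_antitone hρ hπ hM hle'
        have h4 : ρ M ≠ ρ π := rho_strict hρ hπ hM hle' hne'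
        have h5 := card_quot_lt h3 h4
        omega
  intro π hπ
  have := LB (n - Nat.card (Quotient π)) π hπ le_rfl
  have := UB (Nat.card (Quotient π)) π hπ le_rfl
  omega

end Main

/-- The Kreweras complement reverses cover relations: if `π` is covered by `ν` in the
lattice of non-crossing partitions, then `ρ(ν)` is covered by `ρ(π)`. -/
theorem krewerasCompl_reverses_covers (n : ℕ)
    (ρ : Setoid (Fin n) → Setoid (Fin n))
    (hρ : ∀ π, Noncross π → IsKrewerasCompl π (ρ π))
    (π ν : Setoid (Fin n)) (h : NCCovBy π ν) :
    NCCovBy (ρ ν) (ρ π) := by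
  obtain ⟨hπ, hν, hle, hne, hcard⟩ := h
  have hn : 1 ≤ n := by
    by_contra hc
    push_neg at hc
    have h0 : n = 0 := by omega
    subst h0
    exact hne (Setoid.ext fun a => a.elim0)
  have hS1 := kreweras_sum hn hρ π hπ
  have hS2 := kreweras_sum hn hρ ν hν
  refine ⟨(hρ ν hν).1, (hρ π hπ).1, rho_antitone hρ hπ hν hle, rho_strict hρ hπ hν hle hne, ?_⟩
  omega
end
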